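/- arXiv:1906.10807 — 6 statements merged into one kernel-verified Lean document; each statement's English description precedes it below -/
import Mathlib

section
/- Let β ≥ γ ≥ 0 with β + γ > 1. Then for all real a₁, a₂: ∫_ℝ dτ / (⟨τ−a₁⟩^β ⟨τ−a₂⟩^γ) ≲ ⟨a₁−a₂⟩^{−γ} φ_β(a₁−a₂), where φ_β(a) ≈ 1 if β > 1, ≈ log(1+⟨a⟩) if β = 1, and ≈ ⟨a⟩^{1−β} if β < 1. -/
open MeasureTheory Real Set

/-- Japanese bracket. -/
noncomputable def jb (x : ℝ) : ℝ := Real.sqrt (1 + x ^ 2)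

/-- The function `φ_β`. -/
noncomputable def phi (β a : ℝ) : ℝ :=
  if 1 < β then 1 else if β = 1 then Real.log (1 + jb a) else jb a ^ (1 - β)

lemma one_le_jb (x : ℝ) : 1 ≤ jb x := by
  have h := Real.sqrt_le_sqrt (show (1:ℝ) ≤ 1 + x ^ 2 by nlinarith)
  simpa [jb] using h

lemma jb_pos (x : ℝ) : 0 < jb x := lt_of_lt_of_le one_pos (one_le_jb x)

lemma jb_nonneg (x : ℝ) : 0 ≤ jb x := (jb_pos x).le

lemma jb_neg (x : ℝ) : jb (-x) = jb x := by simp [jb]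

lemma abs_le_jb (x : ℝ) : |x| ≤ jb x := by
  rw [jb, ← Real.sqrt_sq_eq_abs]
  exact Real.sqrt_le_sqrt (by nlinarith)

lemma jb_le_one_add_abs (x : ℝ) : jb x ≤ 1 + |x| := by
  rw [jb]
  have h := Real.sqrt_le_sqrt (show 1 + x ^ 2 ≤ (1 + |x|) ^ 2 by
    have := abs_nonneg x; nlinarith [sq_abs x])
  rwa [Real.sqrt_sq (by positivity)] at h

lemma jb_mono {x y : ℝ} (h : |x| ≤ |y|) : jb x ≤ jb y := by
  rw [jb, jb]
  refine Real.sqrt_le_sqrt ?_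
  have : x ^ 2 ≤ y ^ 2 := by
    rw [← sq_abs x, ← sq_abs y]; exact pow_le_pow_left₀ (abs_nonneg x) h 2
  linarith

lemma continuous_jb : Continuous jb := by
  refine Real.continuous_sqrt.comp ?_
  continuity

lemma continuous_jb_rpow (c : ℝ) : Continuous (fun x => jb x ^ c) :=
  continuous_jb.rpow_const (fun x => Or.inl (jb_pos x).ne')

lemma jb_rpow_pos (c x : ℝ) : 0 < jb x ^ c := Real.rpow_pos_of_pos (jb_pos x) c

lemma jb_rpow_nonneg (c x : ℝ) : 0 ≤ jb x ^ c := (jb_rpow_pos c x).le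

lemma rpow_neg_bound {u v c δ : ℝ} (hu : 0 < u) (hc : 0 < c) (hδ : 0 ≤ δ)
    (h : u ≤ c * v) : v ^ (-δ) ≤ c ^ δ * u ^ (-δ) := by
  have hv : 0 < v := by nlinarith
  have h1 : u / c ≤ v := (div_le_iff₀' hc).mpr h
  have h2 : v ^ (-δ) ≤ (u / c) ^ (-δ) :=
    Real.rpow_le_rpow_of_nonpos (by positivity) h1 (neg_nonpos.mpr hδ)
  refine h2.trans_eq ?_
  rw [Real.div_rpow hu.le hc.le, Real.rpow_neg hc.le, div_eq_mul_inv, inv_inv, mul_comm]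

lemma peetre (t a : ℝ) : jb t ≤ Real.sqrt 2 * jb (t - a) * jb a := by
  have h : 1 + t ^ 2 ≤ 2 * ((1 + (t - a) ^ 2) * (1 + a ^ 2)) := by nlinarith [sq_nonneg (t - a), sq_nonneg a, sq_nonneg ((t-a)*a)]
  have h2 := Real.sqrt_le_sqrt h
  rw [Real.sqrt_mul (by norm_num), Real.sqrt_mul (by positivity)] at h2
  simpa [jb, mul_assoc] using h2

lemma jb_rpow_eq (x c : ℝ) : jb x ^ c = (1 + x ^ 2) ^ (c / 2) := by
  rw [jb, Real.sqrt_eq_rpow, ← Real.rpow_mul (by positivity)]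
  norm_num
  rw [mul_comm, mul_one_div]

lemma integrable_jb_rpow {p : ℝ} (hp : 1 < p) :
    Integrable (fun t : ℝ => jb t ^ (-p)) := by
  have h := integrable_rpow_neg_one_add_norm_sq (E := ℝ) (μ := volume)
    (r := p) (by simpa using hp)
  refine h.congr (Filter.Eventually.of_forall fun x => ?_)
  simp only []
  rw [jb_rpow_eq, Real.norm_eq_abs, sq_abs, neg_div]

lemma one_add_abs_le_sqrt2_jb (t : ℝ) : 1 + |t| ≤ Real.sqrt 2 * jb t := by
  have h : (1 + |t|) ^ 2 ≤ 2 * (1 + t ^ 2) := by nlinarith [sq_abs t, sq_nonneg (|t| - 1), abs_nonneg t]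
  have h2 := Real.sqrt_le_sqrt h
  rwa [Real.sqrt_sq (by positivity), Real.sqrt_mul (by norm_num)] at h2

lemma phi_def_lt {δ a : ℝ} (h1 : ¬ 1 < δ) (h2 : δ ≠ 1) : phi δ a = jb a ^ (1 - δ) := by
  simp [phi, h1, h2]

lemma intervalIntegrable_jb (c u v : ℝ) :
    IntervalIntegrable (fun t => jb t ^ c) volume u v :=
  (continuous_jb_rpow c).intervalIntegrable u v

lemma intIcc {δ : ℝ} (hδ0 : 0 ≤ δ) :
    ∃ C > 0, ∀ a : ℝ, ∫ t in Icc (-(|a|/2)) (|a|/2), jb t ^ (-δ) ≤ C * phi δ a := by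
  rcases lt_trichotomy 1 δ with hδ | hδ | hδ
  · -- case 1 < δ
    refine ⟨(∫ t : ℝ, jb t ^ (-δ)) + 1,
      add_pos_of_nonneg_of_pos (integral_nonneg fun t => jb_rpow_nonneg _ t) one_pos,
      fun a => ?_⟩
    have h1 : ∫ t in Icc (-(|a|/2)) (|a|/2), jb t ^ (-δ) ≤ ∫ t : ℝ, jb t ^ (-δ) :=
      setIntegral_le_integral (integrable_jb_rpow hδ)
        (Filter.Eventually.of_forall fun t => jb_rpow_nonneg _ t)
    have h2 : phi δ a = 1 := by simp [phi, hδ]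
    rw [h2, mul_one]
    linarith
  · -- case δ = 1
    subst hδ
    refine ⟨4, by norm_num, fun a => ?_⟩
    set R := |a| / 2 with hR
    have hR0 : 0 ≤ R := by positivity
    have hderiv : ∀ x ∈ Set.uIcc (-R) R, HasDerivAt Real.arsinh ((jb x) ^ (-(1:ℝ))) x := by
      intro x _
      have := Real.hasDerivAt_arsinh x
      simpa [jb, Real.rpow_neg_one] using this
    have hint : ∫ t in Icc (-R) R, jb t ^ (-(1:ℝ))
        = Real.arsinh R - Real.arsinh (-R) := by
      rw [integral_Icc_eq_integral_Ioc, ← intervalIntegral.integral_of_le (by linarith)]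
      exact intervalIntegral.integral_eq_sub_of_hasDerivAt hderiv (intervalIntegrable_jb _ _ _)
    rw [hint, Real.arsinh_neg]
    have harsinh : Real.arsinh R ≤ 2 * Real.log (1 + jb a) := by
      rw [Real.arsinh]
      have hb : 0 < R + Real.sqrt (1 + R ^ 2) := by positivity
      have hjbR : Real.sqrt (1 + R ^ 2) ≤ jb a := by
        rw [show Real.sqrt (1 + R ^ 2) = jb R from rfl]
        exact jb_mono (by rw [abs_of_nonneg hR0, hR]; linarith [abs_nonneg a])
      have hRa : R ≤ jb a := by
        rw [hR]; have := abs_le_jb a; linarith [abs_nonneg a]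
      have h1 : 1 ≤ jb a := one_le_jb a
      have key : Real.log (R + Real.sqrt (1 + R ^ 2))
          ≤ Real.log ((1 + jb a) * (1 + jb a)) := Real.log_le_log hb (by nlinarith)
      rw [Real.log_mul (by linarith) (by linarith)] at key
      linarith
    have hphi : phi 1 a = Real.log (1 + jb a) := by simp [phi]
    rw [hphi]
    linarith
  · -- case δ < 1
    refine ⟨2 * Real.sqrt 2 ^ δ * 2 ^ ((1:ℝ) - δ) / (1 - δ),
      div_pos (by positivity) (by linarith), fun a => ?_⟩
    set R := |a| / 2 with hR
    have hR0 : 0 ≤ R := by positivity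
    have step1 : ∫ t in Icc (-R) R, jb t ^ (-δ) = ∫ t in (-R)..R, jb t ^ (-δ) := by
      rw [integral_Icc_eq_integral_Ioc, ← intervalIntegral.integral_of_le (by linarith)]
    have step3 : ∫ t in (-R)..(0:ℝ), jb t ^ (-δ) = ∫ t in (0:ℝ)..R, jb t ^ (-δ) := by
      have h := intervalIntegral.integral_comp_neg (a := (0:ℝ)) (b := R)
        (fun t => jb t ^ (-δ))
      simp only [jb_neg, neg_zero] at h
      exact h.symm
    have step2 : ∫ t in (-R)..R, jb t ^ (-δ)
        = 2 * ∫ t in (0:ℝ)..R, jb t ^ (-δ) := by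
      rw [← intervalIntegral.integral_add_adjacent_intervals (b := (0:ℝ))
        (intervalIntegrable_jb _ _ _) (intervalIntegrable_jb _ _ _), step3]
      ring
    have step5 : ∫ t in (0:ℝ)..R, jb t ^ (-δ)
        ≤ ∫ t in (0:ℝ)..R, Real.sqrt 2 ^ δ * (1 + |t|) ^ (-δ) := by
      refine intervalIntegral.integral_mono_on hR0 (intervalIntegrable_jb _ _ _) ?_ ?_
      · apply Continuous.intervalIntegrable
        exact continuous_const.mul ((continuous_const.add continuous_abs).rpow_const
          (fun t => Or.inl (by dsimp; positivity)))
      · intro t ht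
        exact rpow_neg_bound (by positivity) (by positivity) hδ0
          (one_add_abs_le_sqrt2_jb t)
    have step6 : ∫ t in (0:ℝ)..R, (1 + |t|) ^ (-δ)
        = ((1 + R) ^ (1 - δ) - 1) / (1 - δ) := by
      rw [intervalIntegral.integral_congr (g := fun t => ((fun x : ℝ => x ^ (-δ)) (1 + t)))
        (fun t ht => by
          rw [Set.uIcc_of_le hR0] at ht
          simp only [abs_of_nonneg ht.1])]
      rw [intervalIntegral.integral_comp_add_left (fun x : ℝ => x ^ (-δ)) 1]
      rw [integral_rpow (Or.inl (by linarith))]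
      norm_num
      rw [show -δ + 1 = 1 - δ by ring]
    have step8 : ((1 + R) ^ (1 - δ) - 1) / (1 - δ) ≤ (2 * jb a) ^ (1 - δ) / (1 - δ) := by
      have h1R : 1 + R ≤ 2 * jb a := by
        have := abs_le_jb a
        have := one_le_jb a
        rw [hR]; linarith
      have h2 := Real.rpow_le_rpow (by linarith) h1R (by linarith : (0:ℝ) ≤ 1 - δ)
      exact (div_le_div_iff_of_pos_right (by linarith)).mpr (by linarith)
    have hphi : phi δ a = jb a ^ (1 - δ) := phi_def_lt (by linarith) (by linarith)
    have hmul : (2 * jb a) ^ ((1:ℝ) - δ) = 2 ^ ((1:ℝ) - δ) * jb a ^ (1 - δ) :=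
      Real.mul_rpow (by norm_num) (jb_nonneg a)
    have step7 : ∫ t in (0:ℝ)..R, Real.sqrt 2 ^ δ * (1 + |t|) ^ (-δ)
        = Real.sqrt 2 ^ δ * (((1 + R) ^ (1 - δ) - 1) / (1 - δ)) := by
      rw [intervalIntegral.integral_const_mul, step6]
    have hnn : (0:ℝ) ≤ Real.sqrt 2 ^ δ := by positivity
    calc ∫ t in Icc (-R) R, jb t ^ (-δ)
        = 2 * ∫ t in (0:ℝ)..R, jb t ^ (-δ) := by rw [step1, step2]
      _ ≤ 2 * (Real.sqrt 2 ^ δ * (((1 + R) ^ (1 - δ) - 1) / (1 - δ))) := by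
          rw [← step7]; linarith [step5]
      _ ≤ 2 * (Real.sqrt 2 ^ δ * ((2 * jb a) ^ ((1:ℝ) - δ) / (1 - δ))) := by
          have := mul_le_mul_of_nonneg_left step8 hnn
          linarith
      _ = 2 * Real.sqrt 2 ^ δ * 2 ^ ((1:ℝ) - δ) / (1 - δ) * phi δ a := by
          rw [hphi, hmul]; ring

lemma intTail {p : ℝ} (hp : 1 < p) :
    ∃ C > 0, ∀ a : ℝ, ∫ t in (Icc (-(|a|/2)) (|a|/2))ᶜ, jb t ^ (-p)
      ≤ C * jb a ^ (1 - p) := by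
  have hint := integrable_jb_rpow hp
  set K : ℝ := (∫ t : ℝ, jb t ^ (-p)) + 1 with hK
  have hK0 : 0 < K := add_pos_of_nonneg_of_pos (integral_nonneg fun t => jb_rpow_nonneg _ t) one_pos
  refine ⟨K * 5 ^ ((p - 1) / 2) + 2 * 4 ^ (p - 1) / (p - 1),
    add_pos (mul_pos hK0 (Real.rpow_pos_of_pos (by norm_num) _))
      (div_pos (by positivity) (by linarith)), fun a => ?_⟩
  set R := |a| / 2 with hR
  have hR0 : 0 ≤ R := by positivity
  have hnonneg : ∀ t : ℝ, 0 ≤ jb t ^ (-p) := fun t => jb_rpow_nonneg _ t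
  have hja : 0 < jb a := jb_pos a
  have hjane : (0:ℝ) ≤ jb a ^ (1 - p) := jb_rpow_nonneg _ a
  rcases le_or_gt (|a|) 2 with hsmall | hlarge
  · -- small |a|
    have h1 : ∫ t in (Icc (-R) R)ᶜ, jb t ^ (-p) ≤ ∫ t : ℝ, jb t ^ (-p) :=
      setIntegral_le_integral hint (Filter.Eventually.of_forall hnonneg)
    have hja5 : jb a ≤ Real.sqrt 5 := by
      rw [jb]
      exact Real.sqrt_le_sqrt (by nlinarith [sq_abs a, abs_nonneg a])
    have h2 : Real.sqrt 5 ^ (1 - p) ≤ jb a ^ (1 - p) :=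
      Real.rpow_le_rpow_of_nonpos hja hja5 (by linarith)
    have h3 : Real.sqrt 5 ^ ((1:ℝ) - p) = (5 : ℝ) ^ (((1:ℝ) - p) / 2) := by
      rw [show Real.sqrt 5 = (5:ℝ) ^ ((1:ℝ)/2) from Real.sqrt_eq_rpow 5,
        ← Real.rpow_mul (by norm_num)]
      norm_num
      rw [one_div, inv_mul_eq_div]
    have h4 : (5:ℝ) ^ ((p-1)/2) * (5:ℝ) ^ ((1-p)/2) = 1 := by
      rw [← Real.rpow_add (by norm_num), show (p-1)/2 + (1-p)/2 = 0 by ring, Real.rpow_zero]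
    have h5 : K = K * 5 ^ ((p-1)/2) * (5:ℝ) ^ ((1-p)/2) := by
      rw [mul_assoc, h4, mul_one]
    rw [h3] at h2
    have h6 : K * 5 ^ ((p-1)/2) * (5:ℝ) ^ ((1-p)/2) ≤ K * 5 ^ ((p-1)/2) * jb a ^ (1 - p) :=
      mul_le_mul_of_nonneg_left h2
        (mul_nonneg hK0.le (Real.rpow_nonneg (by norm_num) _))
    have h7 : ∫ t : ℝ, jb t ^ (-p) ≤ K := by rw [hK]; linarith
    have h8 : (0:ℝ) ≤ 2 * 4 ^ (p - 1) / (p - 1) * jb a ^ (1 - p) :=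
      mul_nonneg (le_of_lt (div_pos (by positivity) (by linarith))) hjane
    calc ∫ t in (Icc (-R) R)ᶜ, jb t ^ (-p) ≤ K := le_trans h1 h7
      _ = K * 5 ^ ((p-1)/2) * (5:ℝ) ^ ((1-p)/2) := h5
      _ ≤ K * 5 ^ ((p-1)/2) * jb a ^ (1 - p) := h6
      _ ≤ (K * 5 ^ ((p-1)/2) + 2 * 4 ^ (p - 1) / (p - 1)) * jb a ^ (1 - p) := by
          rw [add_mul]; linarith
  · -- large |a|
    have hR1 : 1 < R := by rw [hR]; linarith
    have hcompl : (Icc (-R) R)ᶜ = Iio (-R) ∪ Ioi R := by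
      ext x
      simp only [Set.mem_compl_iff, Set.mem_Icc, not_and_or, not_le, Set.mem_union,
        Set.mem_Iio, Set.mem_Ioi]
    have hIoiInt : IntegrableOn (fun t => jb t ^ (-p)) (Ioi R) := hint.integrableOn
    have hIioInt : IntegrableOn (fun t => jb t ^ (-p)) (Iio (-R)) := hint.integrableOn
    have hIicInt : IntegrableOn (fun t => jb t ^ (-p)) (Iic (-R)) := hint.integrableOn
    have hsplit : ∫ t in (Icc (-R) R)ᶜ, jb t ^ (-p)
        = (∫ t in Iio (-R), jb t ^ (-p)) + ∫ t in Ioi R, jb t ^ (-p) := by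
      rw [hcompl]
      refine setIntegral_union ?_ measurableSet_Ioi hIioInt hIoiInt
      rw [Set.disjoint_left]
      intro x hx hx'
      simp only [Set.mem_Iio] at hx
      simp only [Set.mem_Ioi] at hx'
      linarith
    have hrefl : ∫ t in Iic (-R), jb t ^ (-p) = ∫ t in Ioi R, jb t ^ (-p) := by
      have h := integral_comp_neg_Ioi R (fun t => jb t ^ (-p))
      simp only [jb_neg] at h
      exact h.symm
    have hIioIic : ∫ t in Iio (-R), jb t ^ (-p) ≤ ∫ t in Iic (-R), jb t ^ (-p) := by
      refine setIntegral_mono_set hIicInt (Filter.Eventually.of_forall hnonneg) ?_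
      exact Filter.Eventually.of_forall fun x hx => le_of_lt hx
    have htpow : IntegrableOn (fun t : ℝ => t ^ (-p)) (Ioi R) :=
      integrableOn_Ioi_rpow_of_lt (by linarith) (by linarith)
    have hIoile : ∫ t in Ioi R, jb t ^ (-p) ≤ ∫ t in Ioi R, t ^ (-p) := by
      refine setIntegral_mono_on hIoiInt htpow measurableSet_Ioi fun t ht => ?_
      have ht0 : 0 < t := lt_trans (by linarith) ht
      have : t ≤ jb t := le_trans (le_abs_self t) (abs_le_jb t)
      exact Real.rpow_le_rpow_of_nonpos ht0 this (by linarith)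
    have hval : ∫ t in Ioi R, t ^ (-p) = R ^ (1 - p) / (p - 1) := by
      rw [integral_Ioi_rpow_of_lt (by linarith) (by linarith)]
      rw [show -p + 1 = 1 - p by ring]
      have hne : (1:ℝ) - p ≠ 0 := by linarith
      have hne2 : p - 1 ≠ 0 := by linarith
      field_simp
      ring
    have hjaR : jb a ≤ 4 * R := by
      have h1 := jb_le_one_add_abs a
      rw [hR]; linarith
    have hRbound : R ^ ((1:ℝ) - p) ≤ 4 ^ (p - 1) * jb a ^ (1 - p) := by
      have h1 : jb a / 4 ≤ R := by linarith
      have h2 : R ^ ((1:ℝ) - p) ≤ (jb a / 4) ^ ((1:ℝ) - p) :=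
        Real.rpow_le_rpow_of_nonpos (by positivity) h1 (by linarith)
      refine h2.trans_eq ?_
      rw [Real.div_rpow hja.le (by norm_num), div_eq_mul_inv,
        ← Real.rpow_neg (by norm_num : (0:ℝ) ≤ 4), show -((1:ℝ) - p) = p - 1 by ring,
        mul_comm]
    have hfinal : ∫ t in (Icc (-R) R)ᶜ, jb t ^ (-p) ≤ 2 * (R ^ ((1:ℝ)-p) / (p-1)) := by
      rw [hsplit]
      have := hrefl ▸ hIioIic
      linarith
    have hK5 : (0:ℝ) ≤ K * 5 ^ ((p-1)/2) * jb a ^ (1 - p) :=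
      mul_nonneg (mul_nonneg hK0.le (Real.rpow_nonneg (by norm_num) _)) hjane
    have h2' : 2 * (R ^ ((1:ℝ)-p) / (p-1)) ≤ 2 * 4 ^ (p - 1) / (p - 1) * jb a ^ (1-p) := by
      have h9 : R ^ ((1:ℝ)-p) / (p-1) ≤ (4 ^ (p-1) * jb a ^ (1-p)) / (p-1) :=
        (div_le_div_iff_of_pos_right (by linarith)).mpr hRbound
      calc 2 * (R ^ ((1:ℝ)-p) / (p-1)) ≤ 2 * ((4 ^ (p-1) * jb a ^ (1-p)) / (p-1)) := by
            linarith
        _ = 2 * 4 ^ (p - 1) / (p - 1) * jb a ^ (1-p) := by ring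
    calc ∫ t in (Icc (-R) R)ᶜ, jb t ^ (-p) ≤ 2 * (R ^ ((1:ℝ)-p) / (p-1)) := hfinal
      _ ≤ 2 * 4 ^ (p - 1) / (p - 1) * jb a ^ (1-p) := h2'
      _ ≤ (K * 5 ^ ((p-1)/2) + 2 * 4 ^ (p - 1) / (p - 1)) * jb a ^ (1-p) := by
          rw [add_mul]; linarith

lemma log_le_mul_rpow {ε x : ℝ} (hε : 0 < ε) (hx : 1 ≤ x) :
    Real.log (1 + x) ≤ (Real.log 2 + 1/ε) * x ^ ε := by
  have hx0 : 0 < x := by linarith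
  have hxε : (1:ℝ) ≤ x ^ ε := Real.one_le_rpow hx hε.le
  have h1 : Real.log (1 + x) ≤ Real.log (2 * x) :=
    Real.log_le_log (by linarith) (by linarith)
  have h2 : Real.log (2 * x) = Real.log 2 + Real.log x :=
    Real.log_mul (by norm_num) (by linarith)
  have h3 : Real.log x ≤ x ^ ε / ε := by
    have h4 : Real.log (x ^ ε) ≤ x ^ ε - 1 :=
      Real.log_le_sub_one_of_pos (by positivity)
    rw [Real.log_rpow hx0] at h4
    rw [le_div_iff₀ hε, mul_comm]
    linarith
  have hlog2 : (0:ℝ) < Real.log 2 := Real.log_pos one_lt_two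
  calc Real.log (1 + x) ≤ Real.log 2 + Real.log x := by rw [← h2]; exact h1
    _ ≤ Real.log 2 * x ^ ε + x ^ ε / ε := by nlinarith
    _ = (Real.log 2 + 1/ε) * x ^ ε := by ring

lemma phi_def_one (a : ℝ) : phi 1 a = Real.log (1 + jb a) := by norm_num [phi]

lemma phi_def_gt {β : ℝ} (h : 1 < β) (a : ℝ) : phi β a = 1 := by simp [phi, h]

lemma phi_pos {β : ℝ} (a : ℝ) : 0 < phi β a := by
  rcases lt_trichotomy 1 β with h | h | h
  · simp [phi, h]
  · rw [← h, phi_def_one]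
    refine Real.log_pos ?_
    have := one_le_jb a; linarith
  · rw [phi_def_lt (by linarith) (by linarith)]
    exact jb_rpow_pos _ a

lemma comp1 {β : ℝ} : ∃ C > 0, ∀ a : ℝ, jb a ^ ((1:ℝ) - β) ≤ C * phi β a := by
  rcases lt_trichotomy 1 β with h | h | h
  · refine ⟨1, one_pos, fun a => ?_⟩
    have h1 : jb a ^ ((1:ℝ) - β) ≤ 1 :=
      Real.rpow_le_one_of_one_le_of_nonpos (one_le_jb a) (by linarith)
    simpa [phi, h] using h1
  · refine ⟨1 / Real.log 2, by positivity, fun a => ?_⟩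
    have hlog2 : (0:ℝ) < Real.log 2 := Real.log_pos one_lt_two
    have h1 : Real.log 2 ≤ Real.log (1 + jb a) :=
      Real.log_le_log (by norm_num) (by have := one_le_jb a; linarith)
    have h2 : jb a ^ ((1:ℝ) - β) = 1 := by rw [← h, sub_self, Real.rpow_zero]
    rw [h2, ← h, phi_def_one]
    rw [div_mul_eq_mul_div, one_mul, le_div_iff₀ hlog2, one_mul]
    exact h1
  · refine ⟨1, one_pos, fun a => ?_⟩
    rw [phi_def_lt (by linarith) (by linarith), one_mul]

lemma comp2 {β γ : ℝ} (hγ0 : 0 ≤ γ) (hγβ : γ ≤ β) :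
    ∃ C > 0, ∀ a : ℝ, phi γ a ≤ C * jb a ^ (β - γ) * phi β a := by
  rcases lt_trichotomy 1 γ with h | h | h
  · -- 1 < γ ≤ β
    refine ⟨1, one_pos, fun a => ?_⟩
    have hβ : 1 < β := lt_of_lt_of_le h hγβ
    have h1 : (1:ℝ) ≤ jb a ^ (β - γ) := Real.one_le_rpow (one_le_jb a) (by linarith)
    rw [phi_def_gt h, phi_def_gt hβ]
    linarith
  · -- γ = 1
    subst h
    rcases eq_or_lt_of_le hγβ with hβ | hβ
    · refine ⟨1, one_pos, fun a => ?_⟩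
      rw [← hβ, sub_self, Real.rpow_zero, one_mul, one_mul]
    · refine ⟨Real.log 2 + 1/(β - 1), by
        have hlog2 : (0:ℝ) < Real.log 2 := Real.log_pos one_lt_two
        have h0 : (0:ℝ) < 1/(β-1) := one_div_pos.mpr (by linarith)
        linarith, fun a => ?_⟩
      have h1 := log_le_mul_rpow (show (0:ℝ) < β - 1 by linarith) (one_le_jb a)
      rw [phi_def_one, phi_def_gt hβ, mul_one]
      exact h1
  · -- γ < 1
    obtain ⟨C, hC, hcomp⟩ := comp1 (β := β)
    refine ⟨C, hC, fun a => ?_⟩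
    have h1 : phi γ a = jb a ^ ((1:ℝ) - γ) := phi_def_lt (by linarith) (by linarith)
    have h2 : jb a ^ ((1:ℝ) - γ) = jb a ^ (β - γ) * jb a ^ ((1:ℝ) - β) := by
      rw [← Real.rpow_add (jb_pos a)]
      ring_nf
    rw [h1, h2]
    have h3 := hcomp a
    calc jb a ^ (β - γ) * jb a ^ ((1:ℝ) - β) ≤ jb a ^ (β - γ) * (C * phi β a) :=
          mul_le_mul_of_nonneg_left h3 (jb_rpow_nonneg _ a)
      _ = C * jb a ^ (β - γ) * phi β a := by ring

lemma jb_le_mul {c x y : ℝ} (hc1 : 1 ≤ c) (h : |x| ≤ c * |y|) : jb x ≤ c * jb y := by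
  have hsq : x ^ 2 ≤ c ^ 2 * y ^ 2 := by
    nlinarith [abs_nonneg x, abs_nonneg y, sq_abs x, sq_abs y]
  have h2 := Real.sqrt_le_sqrt (show 1 + x ^ 2 ≤ c ^ 2 * (1 + y ^ 2) by nlinarith)
  rw [Real.sqrt_mul (by positivity), Real.sqrt_sq (by linarith)] at h2
  exact h2

lemma core {β γ : ℝ} (hγ0 : 0 ≤ γ) (hγβ : γ ≤ β) (hβγ : 1 < β + γ) :
    ∃ C > 0, ∀ a : ℝ, ∫ t : ℝ, jb t ^ (-β) * jb (t - a) ^ (-γ)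
      ≤ C * jb a ^ (-γ) * phi β a := by
  have hβ0 : 0 ≤ β := le_trans hγ0 hγβ
  obtain ⟨C₁, hC₁, hI₁⟩ := intIcc hβ0
  obtain ⟨C₂, hC₂, hI₂⟩ := intIcc hγ0
  obtain ⟨C₃, hC₃, hI₃⟩ := intTail hβγ
  obtain ⟨C₄, hC₄, hI₄⟩ := comp1 (β := β)
  obtain ⟨C₅, hC₅, hI₅⟩ := comp2 hγ0 hγβ
  refine ⟨2 ^ γ * C₁ + 2 ^ β * C₂ * C₅ + 3 ^ γ * C₃ * C₄, by positivity, fun a => ?_⟩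
  set R := |a| / 2 with hR
  have hR0 : 0 ≤ R := by positivity
  set A : Set ℝ := Icc (-R) R with hA
  set B : Set ℝ := Icc (a - R) (a + R) with hB
  set g : ℝ → ℝ := fun t => jb t ^ (-β) * jb (t - a) ^ (-γ) with hg
  have hja : 0 < jb a := jb_pos a
  have hcont2 : Continuous (fun t : ℝ => jb (t - a) ^ (-γ)) :=
    (continuous_jb_rpow (-γ)).comp (continuous_id.sub continuous_const)
  have hgcont : Continuous g := (continuous_jb_rpow (-β)).mul hcont2
  have hgnn : ∀ t, 0 ≤ g t := fun t =>
    mul_nonneg (jb_rpow_nonneg _ t) (jb_rpow_nonneg _ _)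
  -- global integrability of g
  have hgint : Integrable g := by
    refine ((integrable_jb_rpow hβγ).const_mul ((Real.sqrt 2 * jb a) ^ γ)).mono'
      hgcont.aestronglyMeasurable (Filter.Eventually.of_forall fun t => ?_)
    rw [Real.norm_eq_abs, abs_of_nonneg (hgnn t)]
    have h1 : jb (t - a) ^ (-γ) ≤ (Real.sqrt 2 * jb a) ^ γ * jb t ^ (-γ) :=
      rpow_neg_bound (jb_pos t) (by positivity) hγ0
        ((peetre t a).trans_eq (by ring))
    calc g t ≤ jb t ^ (-β) * ((Real.sqrt 2 * jb a) ^ γ * jb t ^ (-γ)) :=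
          mul_le_mul_of_nonneg_left h1 (jb_rpow_nonneg _ t)
      _ = (Real.sqrt 2 * jb a) ^ γ * (jb t ^ (-β) * jb t ^ (-γ)) := by ring
      _ = (Real.sqrt 2 * jb a) ^ γ * jb t ^ (-(β + γ)) := by
          rw [← Real.rpow_add (jb_pos t), neg_add]
  -- the three dominating pieces
  set F₁ : ℝ → ℝ := A.indicator (fun t => 2 ^ γ * jb a ^ (-γ) * jb t ^ (-β)) with hF₁def
  set F₂ : ℝ → ℝ := B.indicator (fun t => 2 ^ β * jb a ^ (-β) * jb (t - a) ^ (-γ)) with hF₂def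
  set F₃ : ℝ → ℝ := Aᶜ.indicator (fun t => 3 ^ γ * jb t ^ (-(β + γ))) with hF₃def
  have hF₁int : Integrable F₁ := by
    refine (IntegrableOn.integrable_indicator ?_ measurableSet_Icc)
    exact (continuous_const.mul (continuous_jb_rpow (-β))).integrableOn_Icc
  have hF₂int : Integrable F₂ := by
    refine (IntegrableOn.integrable_indicator ?_ measurableSet_Icc)
    exact (continuous_const.mul hcont2).integrableOn_Icc
  have hF₃int : Integrable F₃ :=
    ((integrable_jb_rpow hβγ).const_mul _).indicator measurableSet_Icc.compl
  have hF₁nn : ∀ t, 0 ≤ F₁ t := fun t =>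
    Set.indicator_nonneg (fun s _ => mul_nonneg
      (mul_nonneg (Real.rpow_nonneg (by norm_num) _) (jb_rpow_nonneg _ _))
      (jb_rpow_nonneg _ _)) t
  have hF₂nn : ∀ t, 0 ≤ F₂ t := fun t =>
    Set.indicator_nonneg (fun s _ => mul_nonneg
      (mul_nonneg (Real.rpow_nonneg (by norm_num) _) (jb_rpow_nonneg _ _))
      (jb_rpow_nonneg _ _)) t
  have hF₃nn : ∀ t, 0 ≤ F₃ t := fun t =>
    Set.indicator_nonneg (fun s _ => mul_nonneg
      (Real.rpow_nonneg (by norm_num) _) (jb_rpow_nonneg _ _)) t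
  -- pointwise bound
  have hpt : ∀ t, g t ≤ F₁ t + F₂ t + F₃ t := by
    intro t
    by_cases h1 : |t| ≤ R
    · have htA : t ∈ A := by rw [hA, Set.mem_Icc, ← abs_le]; exact h1
      have hta : |a| ≤ 2 * |t - a| := by
        have := abs_sub_abs_le_abs_sub a t
        have h3 : |a - t| = |t - a| := abs_sub_comm a t
        rw [hR] at h1
        linarith [abs_sub_comm a t ▸ abs_sub_abs_le_abs_sub a t]
      have hjb : jb a ≤ 2 * jb (t - a) := jb_le_mul (by norm_num) hta
      have h2 : jb (t - a) ^ (-γ) ≤ 2 ^ γ * jb a ^ (-γ) :=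
        rpow_neg_bound hja (by norm_num) hγ0 hjb
      have hgle : g t ≤ F₁ t := by
        rw [hF₁def, Set.indicator_of_mem htA]
        calc g t ≤ jb t ^ (-β) * (2 ^ γ * jb a ^ (-γ)) :=
              mul_le_mul_of_nonneg_left h2 (jb_rpow_nonneg _ t)
          _ = 2 ^ γ * jb a ^ (-γ) * jb t ^ (-β) := by ring
      linarith [hF₂nn t, hF₃nn t]
    · push_neg at h1
      by_cases h2 : |t - a| ≤ R
      · have htB : t ∈ B := by
          rw [hB, Set.mem_Icc]
          constructor <;> [skip; skip] <;> cases' abs_le.mp h2 with hl hr <;> linarith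
        have hta : |a| ≤ 2 * |t| := by
          have h3 := abs_sub_abs_le_abs_sub a t
          rw [abs_sub_comm a t] at h3
          rw [hR] at h2
          linarith
        have hjb : jb a ≤ 2 * jb t := jb_le_mul (by norm_num) hta
        have h3 : jb t ^ (-β) ≤ 2 ^ β * jb a ^ (-β) :=
          rpow_neg_bound hja (by norm_num) hβ0 hjb
        have hgle : g t ≤ F₂ t := by
          rw [hF₂def, Set.indicator_of_mem htB]
          calc g t ≤ (2 ^ β * jb a ^ (-β)) * jb (t - a) ^ (-γ) :=
                mul_le_mul_of_nonneg_right h3 (jb_rpow_nonneg _ _)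
            _ = 2 ^ β * jb a ^ (-β) * jb (t - a) ^ (-γ) := by ring
        linarith [hF₁nn t, hF₃nn t]
      · push_neg at h2
        have htAc : t ∈ Aᶜ := by
          rw [hA, Set.mem_compl_iff, Set.mem_Icc]
          intro hmem
          exact absurd (abs_le.mpr hmem) (not_le.mpr h1)
        have htt : |t| ≤ 3 * |t - a| := by
          rcases le_or_gt (|t|) (3 * R) with h4 | h4
          · linarith
          · have h5 : |t - a| ≥ |t| - |a| := by
              have := abs_sub_abs_le_abs_sub t a
              linarith
            rw [hR] at h4
            linarith
        have hjb : jb t ≤ 3 * jb (t - a) := jb_le_mul (by norm_num) htt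
        have h3 : jb (t - a) ^ (-γ) ≤ 3 ^ γ * jb t ^ (-γ) :=
          rpow_neg_bound (jb_pos t) (by norm_num) hγ0 hjb
        have hgle : g t ≤ F₃ t := by
          rw [hF₃def, Set.indicator_of_mem htAc]
          calc g t ≤ jb t ^ (-β) * (3 ^ γ * jb t ^ (-γ)) :=
                mul_le_mul_of_nonneg_left h3 (jb_rpow_nonneg _ t)
            _ = 3 ^ γ * (jb t ^ (-β) * jb t ^ (-γ)) := by ring
            _ = 3 ^ γ * jb t ^ (-(β + γ)) := by
                rw [← Real.rpow_add (jb_pos t), neg_add]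
        linarith [hF₁nn t, hF₂nn t]
  -- integral bound
  have h12int : Integrable (fun t => F₁ t + F₂ t) := hF₁int.add hF₂int
  have h123int : Integrable (fun t => F₁ t + F₂ t + F₃ t) := h12int.add hF₃int
  have hmono : ∫ t, g t ≤ ∫ t, (F₁ t + F₂ t + F₃ t) :=
    integral_mono hgint h123int hpt
  have hsplit : ∫ t, (F₁ t + F₂ t + F₃ t) = (∫ t, F₁ t) + (∫ t, F₂ t) + ∫ t, F₃ t := by
    rw [integral_add h12int hF₃int, integral_add hF₁int hF₂int]
  -- bound each piece
  have hB1 : ∫ t, F₁ t ≤ 2 ^ γ * C₁ * (jb a ^ (-γ) * phi β a) := by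
    rw [hF₁def, integral_indicator measurableSet_Icc, integral_const_mul]
    calc 2 ^ γ * jb a ^ (-γ) * ∫ t in A, jb t ^ (-β)
        ≤ 2 ^ γ * jb a ^ (-γ) * (C₁ * phi β a) := by
          refine mul_le_mul_of_nonneg_left (hI₁ a) (by positivity)
      _ = 2 ^ γ * C₁ * (jb a ^ (-γ) * phi β a) := by ring
  have htrans : ∫ t in B, jb (t - a) ^ (-γ) = ∫ t in A, jb t ^ (-γ) := by
    rw [hA, hB, integral_Icc_eq_integral_Ioc, integral_Icc_eq_integral_Ioc,
      ← intervalIntegral.integral_of_le (by linarith : a - R ≤ a + R),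
      ← intervalIntegral.integral_of_le (by linarith : -R ≤ R),
      intervalIntegral.integral_comp_sub_right (fun s => jb s ^ (-γ)) a]
    norm_num
  have hB2 : ∫ t, F₂ t ≤ 2 ^ β * C₂ * C₅ * (jb a ^ (-γ) * phi β a) := by
    rw [hF₂def, integral_indicator measurableSet_Icc, integral_const_mul, htrans]
    have h5 : ∫ t in A, jb t ^ (-γ) ≤ C₂ * (C₅ * jb a ^ (β - γ) * phi β a) := by
      refine le_trans (hI₂ a) ?_
      exact mul_le_mul_of_nonneg_left (hI₅ a) hC₂.le
    calc 2 ^ β * jb a ^ (-β) * ∫ t in A, jb t ^ (-γ)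
        ≤ 2 ^ β * jb a ^ (-β) * (C₂ * (C₅ * jb a ^ (β - γ) * phi β a)) := by
          refine mul_le_mul_of_nonneg_left h5 (by positivity)
      _ = 2 ^ β * C₂ * C₅ * ((jb a ^ (-β) * jb a ^ (β - γ)) * phi β a) := by ring
      _ = 2 ^ β * C₂ * C₅ * (jb a ^ (-γ) * phi β a) := by
          rw [← Real.rpow_add hja, show -β + (β - γ) = -γ by ring]
  have hB3 : ∫ t, F₃ t ≤ 3 ^ γ * C₃ * C₄ * (jb a ^ (-γ) * phi β a) := by
    rw [hF₃def, integral_indicator measurableSet_Icc.compl, integral_const_mul]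
    have h6 : ∫ t in Aᶜ, jb t ^ (-(β + γ)) ≤ C₃ * jb a ^ (1 - (β + γ)) := hI₃ a
    have h7 : jb a ^ ((1:ℝ) - (β + γ)) = jb a ^ (-γ) * jb a ^ ((1:ℝ) - β) := by
      rw [← Real.rpow_add hja]; ring_nf
    have h8 : jb a ^ ((1:ℝ) - β) ≤ C₄ * phi β a := hI₄ a
    calc 3 ^ γ * ∫ t in Aᶜ, jb t ^ (-(β + γ))
        ≤ 3 ^ γ * (C₃ * (jb a ^ (-γ) * jb a ^ ((1:ℝ) - β))) := by
          rw [← h7]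
          exact mul_le_mul_of_nonneg_left h6 (by positivity)
      _ ≤ 3 ^ γ * (C₃ * (jb a ^ (-γ) * (C₄ * phi β a))) := by
          refine mul_le_mul_of_nonneg_left ?_ (by positivity)
          refine mul_le_mul_of_nonneg_left ?_ hC₃.le
          exact mul_le_mul_of_nonneg_left h8 (jb_rpow_nonneg _ a)
      _ = 3 ^ γ * C₃ * C₄ * (jb a ^ (-γ) * phi β a) := by ring
  calc ∫ t, g t ≤ (∫ t, F₁ t) + (∫ t, F₂ t) + ∫ t, F₃ t := hsplit ▸ hmono
    _ ≤ (2 ^ γ * C₁ + 2 ^ β * C₂ * C₅ + 3 ^ γ * C₃ * C₄) * (jb a ^ (-γ) * phi β a) := by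
        rw [add_mul, add_mul]
        linarith [hB1, hB2, hB3]
    _ = (2 ^ γ * C₁ + 2 ^ β * C₂ * C₅ + 3 ^ γ * C₃ * C₄) * jb a ^ (-γ) * phi β a := by ring

lemma phi_congr {β x y : ℝ} (h : jb x = jb y) : phi β x = phi β y := by
  simp [phi, h]

theorem convolution_bracket_bound (β γ : ℝ) (hγ0 : 0 ≤ γ) (hγβ : γ ≤ β)
    (hβγ : 1 < β + γ) :
    ∃ C > 0, ∀ a₁ a₂ : ℝ,
      ∫ τ : ℝ, jb (τ - a₁) ^ (-β) * jb (τ - a₂) ^ (-γ)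
        ≤ C * jb (a₁ - a₂) ^ (-γ) * phi β (a₁ - a₂) := by
  obtain ⟨C, hC, hcore⟩ := core hγ0 hγβ hβγ
  refine ⟨C, hC, fun a₁ a₂ => ?_⟩
  set a : ℝ := a₂ - a₁ with ha
  have hjb : jb a = jb (a₁ - a₂) := by
    rw [show a₁ - a₂ = -a by rw [ha]; ring, jb_neg]
  have hphi : phi β a = phi β (a₁ - a₂) := phi_congr hjb
  have htrans : ∫ τ : ℝ, jb (τ - a₁) ^ (-β) * jb (τ - a₂) ^ (-γ)
      = ∫ t : ℝ, jb t ^ (-β) * jb (t - a) ^ (-γ) := by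
    rw [← integral_add_right_eq_self
      (fun τ : ℝ => jb (τ - a₁) ^ (-β) * jb (τ - a₂) ^ (-γ)) a₁]
    congr 1
    funext x
    rw [show x + a₁ - a₁ = x by ring, show x + a₁ - a₂ = x - a by rw [ha]; ring]
  rw [htrans, ← hjb, ← hphi]
  exact hcore a
end

section
/- For d ≥ 11, the trilinear estimate ‖u·v·w‖_{L¹(ℝ^d)} ≲ ‖u‖_{H²}‖v‖_{H²}‖w‖_{H¹} fails: there is no constant C such that the inequality holds for all u, v ∈ H²(ℝ^d) and w ∈ H¹(ℝ^d). -/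
open MeasureTheory

section Aux

open FourierTransform RealInnerProductSpace

variable {E : Type*} [NormedAddCommGroup E] [InnerProductSpace ℝ E]
  [MeasurableSpace E] [BorelSpace E] [FiniteDimensional ℝ E]

/-- A smooth compactly supported function is a Schwartz function. -/
def SchwartzMap.ofCompactSupport {F : Type*} [NormedAddCommGroup F] [NormedSpace ℝ F]
    {f : E → F} (h1 : ContDiff ℝ ((⊤ : ℕ∞) : WithTop ℕ∞) f) (h2 : HasCompactSupport f) :
    SchwartzMap E F where
  toFun := f
  smooth' := h1
  decay' := by
    intro k n
    have hc : HasCompactSupport (fun x => ‖x‖ ^ k * ‖iteratedFDeriv ℝ n f x‖) := by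
      apply HasCompactSupport.mono (h2.iteratedFDeriv (𝕜 := ℝ) n)
      intro x hx
      simp only [Function.mem_support, ne_eq] at hx ⊢
      intro h
      exact hx (by simp [h])
    have hcont : Continuous (fun x => ‖x‖ ^ k * ‖iteratedFDeriv ℝ n f x‖) :=
      (continuous_norm.pow k).mul (h1.continuous_iteratedFDeriv (mod_cast le_top)).norm
    obtain ⟨C, hC⟩ := hc.exists_bound_of_continuous hcont
    refine ⟨C, fun x => ?_⟩
    have := hC x
    rwa [Real.norm_eq_abs, abs_of_nonneg (by positivity)] at this

set_option linter.unusedSectionVars false in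
@[simp] lemma SchwartzMap.ofCompactSupport_apply {F : Type*} [NormedAddCommGroup F]
    [NormedSpace ℝ F] {f : E → F} (h1 : ContDiff ℝ ((⊤ : ℕ∞) : WithTop ℕ∞) f) (h2 : HasCompactSupport f) (x : E) :
    SchwartzMap.ofCompactSupport h1 h2 x = f x := rfl

lemma fourier_comp_smul (f : E → ℂ) {R : ℝ} (hR : 0 < R) (ξ : E) :
    𝓕 (fun x => f (R • x)) ξ = ((R ^ (Module.finrank ℝ E))⁻¹ : ℝ) • 𝓕 f (R⁻¹ • ξ) := by
  rw [Real.fourier_eq, Real.fourier_eq]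
  have key : (fun x : E => (𝐞 (-⟪x, ξ⟫) : Circle) • f (R • x))
      = fun x : E => (fun y => (𝐞 (-⟪y, R⁻¹ • ξ⟫) : Circle) • f y) (R • x) := by
    funext x
    have h : (⟪R • x, R⁻¹ • ξ⟫ : ℝ) = ⟪x, ξ⟫ := by
      rw [real_inner_smul_left, real_inner_smul_right]
      field_simp
    simp only [h]
  rw [key, MeasureTheory.Measure.integral_comp_smul volume
    (fun y => (𝐞 (-⟪y, R⁻¹ • ξ⟫) : Circle) • f y) R]
  congr 1
  rw [abs_of_nonneg (by positivity)]

lemma fourier_const_smul (f : E → ℂ) (c : ℝ) (ξ : E) :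
    𝓕 (fun x => c • f x) ξ = c • 𝓕 f ξ := by
  rw [Real.fourier_eq, Real.fourier_eq, ← integral_smul]
  congr 1 with x
  rw [smul_comm]

/-- Integrability of the Sobolev-norm integrand for a Schwartz function. -/
lemma integrable_weight (g : SchwartzMap E ℂ) (k : ℕ) :
    Integrable (fun ξ : E => (1 + ‖ξ‖ ^ 2) ^ k * ‖g ξ‖ ^ 2) := by
  have base : Integrable (fun ξ : E => (1 + ‖ξ‖ ^ 2) ^ k * ‖g ξ‖) := by
    have expand : ∀ ξ : E, (1 + ‖ξ‖ ^ 2) ^ k * ‖g ξ‖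
        = ∑ j ∈ Finset.range (k + 1), (k.choose j : ℝ) * (‖ξ‖ ^ (2 * j) * ‖g ξ‖) := by
      intro ξ
      rw [add_comm (1 : ℝ), add_pow, Finset.sum_mul]
      refine Finset.sum_congr rfl fun j hj => ?_
      rw [one_pow, mul_one, ← pow_mul]
      ring
    simp_rw [expand]
    exact integrable_finset_sum _ fun j _ => (g.integrable_pow_mul volume (2 * j)).const_mul _
  obtain ⟨M, hM⟩ : ∃ M : ℝ, ∀ x, ‖g x‖ ≤ M := by
    obtain ⟨C, hC⟩ := g.decay' 0 0
    exact ⟨C, fun x => by have h := hC x; simp only [pow_zero, one_mul, norm_iteratedFDeriv_zero] at h; exact h⟩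
  refine (base.mul_const M).mono' ?_ ?_
  · exact (((continuous_const.add (continuous_norm.pow 2)).pow k).mul
      (g.continuous.norm.pow 2)).aestronglyMeasurable
  · filter_upwards with ξ
    have h1 : (0 : ℝ) ≤ (1 + ‖ξ‖ ^ 2) ^ k := by positivity
    rw [Real.norm_eq_abs, abs_of_nonneg (by positivity)]
    calc (1 + ‖ξ‖ ^ 2) ^ k * ‖g ξ‖ ^ 2 = (1 + ‖ξ‖ ^ 2) ^ k * ‖g ξ‖ * ‖g ξ‖ := by ring
    _ ≤ (1 + ‖ξ‖ ^ 2) ^ k * ‖g ξ‖ * M := by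
        refine mul_le_mul_of_nonneg_left (hM ξ) (by positivity)

/-- Scaling estimate for the Sobolev-norm integral. -/
lemma integral_weight_scale (g : SchwartzMap E ℂ) (k : ℕ) {R : ℝ} (hR : 1 ≤ R) :
    (∫ ξ : E, (1 + ‖ξ‖ ^ 2) ^ k * ‖g (R⁻¹ • ξ)‖ ^ 2)
      ≤ R ^ (Module.finrank ℝ E) * R ^ (2 * k)
        * ∫ ξ : E, (1 + ‖ξ‖ ^ 2) ^ k * ‖g ξ‖ ^ 2 := by
  have h0 : (0 : ℝ) < R := lt_of_lt_of_le one_pos hR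
  have e1 : (fun ξ : E => (1 + ‖ξ‖ ^ 2) ^ k * ‖g (R⁻¹ • ξ)‖ ^ 2)
      = fun ξ : E => (fun η => (1 + ‖R • η‖ ^ 2) ^ k * ‖g η‖ ^ 2) (R⁻¹ • ξ) := by
    funext ξ
    simp only [smul_inv_smul₀ h0.ne']
  have e2 := MeasureTheory.Measure.integral_comp_inv_smul_of_nonneg volume
    (fun η : E => (1 + ‖R • η‖ ^ 2) ^ k * ‖g η‖ ^ 2) h0.le
  rw [e1, e2]
  have hmono : (∫ η : E, (1 + ‖R • η‖ ^ 2) ^ k * ‖g η‖ ^ 2)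
      ≤ ∫ η : E, R ^ (2 * k) * ((1 + ‖η‖ ^ 2) ^ k * ‖g η‖ ^ 2) := by
    refine integral_mono_of_nonneg ?_ ((integrable_weight g k).const_mul _) ?_
    · filter_upwards with η; positivity
    · filter_upwards with η
      have h2 : ‖R • η‖ ^ 2 = R ^ 2 * ‖η‖ ^ 2 := by
        rw [norm_smul, Real.norm_eq_abs, abs_of_pos h0, mul_pow]
      have h3 : (1 + ‖R • η‖ ^ 2) ^ k ≤ (R ^ 2) ^ k * (1 + ‖η‖ ^ 2) ^ k := by
        rw [← mul_pow]
        refine pow_le_pow_left₀ (by positivity) ?_ k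
        rw [h2, mul_add, mul_one]
        have : (1 : ℝ) ≤ R ^ 2 := one_le_pow₀ hR
        linarith
      calc (1 + ‖R • η‖ ^ 2) ^ k * ‖g η‖ ^ 2
          ≤ (R ^ 2) ^ k * (1 + ‖η‖ ^ 2) ^ k * ‖g η‖ ^ 2 :=
            mul_le_mul_of_nonneg_right h3 (by positivity)
        _ = R ^ (2 * k) * ((1 + ‖η‖ ^ 2) ^ k * ‖g η‖ ^ 2) := by
            rw [← pow_mul]; ring
    
  rw [integral_const_mul] at hmono
  calc R ^ Module.finrank ℝ E • ∫ η : E, (1 + ‖R • η‖ ^ 2) ^ k * ‖g η‖ ^ 2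
      ≤ R ^ Module.finrank ℝ E * (R ^ (2 * k) * ∫ ξ : E, (1 + ‖ξ‖ ^ 2) ^ k * ‖g ξ‖ ^ 2) := by
        rw [smul_eq_mul]
        exact mul_le_mul_of_nonneg_left hmono (by positivity)
    _ = R ^ (Module.finrank ℝ E) * R ^ (2 * k) * ∫ ξ : E, (1 + ‖ξ‖ ^ 2) ^ k * ‖g ξ‖ ^ 2 := by ring

end Aux


/-- The `H^k(ℝ^d)` norm of a (real-valued) Schwartz function, defined via the
Fourier transform. -/
noncomputable def sobNorm (d : ℕ) (k : ℝ)
    (f : SchwartzMap (EuclideanSpace ℝ (Fin d)) ℝ) : ℝ :=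
  (∫ ξ : EuclideanSpace ℝ (Fin d),
      (1 + ‖ξ‖ ^ 2) ^ k *
        ‖FourierTransform.fourier (fun x => ((f x : ℝ) : ℂ)) ξ‖ ^ 2) ^ ((1 : ℝ) / 2)

/-- The trilinear estimate `‖uvw‖_{L¹} ≲ ‖u‖_{H²}‖v‖_{H²}‖w‖_{H¹}` fails in
dimensions `d ≥ 11`. -/
theorem trilinear_estimate_fails (d : ℕ) (hd : 11 ≤ d) :
    ¬ ∃ C : ℝ, ∀ u v w : SchwartzMap (EuclideanSpace ℝ (Fin d)) ℝ,
      (∫ x : EuclideanSpace ℝ (Fin d), |u x * v x * w x|)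
        ≤ C * sobNorm d 2 u * sobNorm d 2 v * sobNorm d 1 w := by
  --
  rintro ⟨C, hC⟩
  set E := EuclideanSpace ℝ (Fin d) with hE
  -- the basic bump function and its Schwartz versions
  let b : ContDiffBump (0 : E) := ⟨1, 2, one_pos, one_lt_two⟩
  have hbc : ContDiff ℝ ((⊤ : ℕ∞) : WithTop ℕ∞) ⇑b := b.contDiff
  have hbs : HasCompactSupport ⇑b := b.hasCompactSupport
  have hbc' : ContDiff ℝ ((⊤ : ℕ∞) : WithTop ℕ∞) (fun x : E => ((b x : ℝ) : ℂ)) :=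
    Complex.ofRealCLM.contDiff.comp hbc
  have hbs' : HasCompactSupport (fun x : E => ((b x : ℝ) : ℂ)) := by
    apply hbs.mono
    intro x hx
    simp only [Function.mem_support, ne_eq] at hx ⊢
    intro h
    exact hx (by rw [h]; simp)
  let φ : SchwartzMap E ℝ := SchwartzMap.ofCompactSupport hbc hbs
  let φc : SchwartzMap E ℂ := SchwartzMap.ofCompactSupport hbc' hbs'
  let ψ : SchwartzMap E ℂ := SchwartzMap.fourierTransformCLM ℝ φc
  -- nonnegativity of all Sobolev norms
  have sob_nonneg : ∀ (k : ℝ) (f : SchwartzMap E ℝ), 0 ≤ sobNorm d k f := by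
    intro k f
    apply Real.rpow_nonneg
    apply integral_nonneg
    intro ξ
    positivity
  -- the L³-type constant
  set c : ℝ := ∫ x : E, |φ x * φ x * φ x| with hcdef
  have hc : 0 < c := by
    have hcont3 : Continuous (fun x : E => |b x * b x * b x|) :=
      ((b.continuous.mul b.continuous).mul b.continuous).abs
    have hsupp3 : HasCompactSupport (fun x : E => |b x * b x * b x|) := by
      apply hbs.mono
      intro x hx
      simp only [Function.mem_support, ne_eq, abs_eq_zero] at hx ⊢
      intro h
      exact hx (by rw [h]; ring)
    have hcint : Integrable (fun x : E => |b x * b x * b x|) :=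
      hcont3.integrable_of_hasCompactSupport hsupp3
    have : (0:ℝ) < ∫ x : E, |b x * b x * b x| := by
      rw [integral_pos_iff_support_of_nonneg (fun x => abs_nonneg _) hcint]
      have hsub : Metric.ball (0 : E) 1 ⊆
          Function.support (fun x : E => |b x * b x * b x|) := by
        intro x hx
        have hbx : b x = 1 := b.one_of_mem_closedBall (Metric.ball_subset_closedBall hx)
        simp [Function.mem_support, hbx]
      calc (0:ENNReal) < volume (Metric.ball (0:E) 1) :=
            Metric.measure_ball_pos _ _ one_pos
        _ ≤ volume (Function.support (fun x : E => |b x * b x * b x|)) :=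
            measure_mono hsub
    exact this
  -- the Sobolev integrals of `φ`
  set S : ℕ → ℝ := fun k => ∫ ξ : E, (1 + ‖ξ‖ ^ 2) ^ k * ‖ψ ξ‖ ^ 2 with hSdef
  have hS_nonneg : ∀ k, 0 ≤ S k := by
    intro k
    apply integral_nonneg
    intro ξ
    positivity
  have hsob : ∀ k : ℕ, sobNorm d k φ = (S k) ^ ((1:ℝ)/2) := by
    intro k
    unfold sobNorm
    congr 1
    apply integral_congr_ae
    filter_upwards with ξ
    rw [Real.rpow_natCast]
    rfl
  -- main quantitative estimate
  have key : ∀ r : ℝ, 1 ≤ r →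
      r ^ (4*d) * c ≤ |C| * (sobNorm d 2 φ * sobNorm d 2 φ * sobNorm d 1 φ) * r ^ (3*d+10) := by
    intro r hr
    have hr0 : (0:ℝ) < r := lt_of_lt_of_le one_pos hr
    set R : ℝ := r ^ 2 with hRdef
    have hR1 : (1:ℝ) ≤ R := one_le_pow₀ hr
    have hR0 : (0:ℝ) < R := lt_of_lt_of_le one_pos hR1
    -- the rescaled bump
    have hfc : ContDiff ℝ ((⊤ : ℕ∞) : WithTop ℕ∞) (fun x : E => R ^ d * b (R • x)) :=
      contDiff_const.mul (hbc.comp (contDiff_const_smul R))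
    have hfs : HasCompactSupport (fun x : E => R ^ d * b (R • x)) := by
      have h1 : HasCompactSupport (fun y : E => R ^ d * b y) := by
        apply hbs.mono
        intro x hx
        simp only [Function.mem_support, ne_eq] at hx ⊢
        intro h
        exact hx (by rw [h]; ring)
      exact h1.comp_isClosedEmbedding
        (Homeomorph.smulOfNeZero R hR0.ne' (α := E)).isClosedEmbedding
    let uR : SchwartzMap E ℝ := SchwartzMap.ofCompactSupport hfc hfs
    -- Step 1: the L¹ norm of the cube
    have hL : (∫ x : E, |uR x * uR x * uR x|) = R ^ (2*d) * c := by
      have e1 : (fun x : E => |uR x * uR x * uR x|)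
          = fun x : E => (fun y : E => (R ^ d) ^ 3 * |b y * b y * b y|) (R • x) := by
        funext x
        show |(R ^ d * b (R • x)) * (R ^ d * b (R • x)) * (R ^ d * b (R • x))| = _
        rw [show (R ^ d * b (R • x)) * (R ^ d * b (R • x)) * (R ^ d * b (R • x))
            = (R ^ d) ^ 3 * (b (R • x) * b (R • x) * b (R • x)) from by ring]
        rw [abs_mul, abs_of_nonneg (by positivity : (0:ℝ) ≤ (R ^ d) ^ 3)]
      have e2 := MeasureTheory.Measure.integral_comp_smul_of_nonneg volume
        (fun y : E => (R ^ d) ^ 3 * |b y * b y * b y|) R (hR := hR0.le)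
      rw [e1, e2, integral_const_mul, finrank_euclideanSpace_fin, smul_eq_mul]
      have hcb : c = ∫ x : E, |b x * b x * b x| := rfl
      rw [← hcb]
      have hRd : (R:ℝ) ^ d ≠ 0 := pow_ne_zero _ hR0.ne'
      field_simp
      ring
    -- Step 2: the Fourier transform of the rescaled bump
    have hF : ∀ ξ : E, FourierTransform.fourier (fun x : E => ((uR x : ℝ) : ℂ)) ξ
        = ψ (R⁻¹ • ξ) := by
      intro ξ
      have e3 : (fun x : E => ((uR x : ℝ) : ℂ))
          = fun x : E => (R ^ d : ℝ) • (⇑φc) (R • x) := by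
        funext x
        show ((R ^ d * b (R • x) : ℝ) : ℂ) = (R ^ d : ℝ) • ((b (R • x) : ℝ) : ℂ)
        rw [Complex.real_smul, Complex.ofReal_mul]
      rw [e3, fourier_const_smul (fun x : E => (⇑φc) (R • x)) (R ^ d) ξ,
        fourier_comp_smul (⇑φc) hR0 ξ, finrank_euclideanSpace_fin, smul_smul,
        mul_inv_cancel₀ (pow_ne_zero _ hR0.ne'), one_smul]
      rfl
    -- Step 3: the Sobolev norm bound for the rescaled bump
    have hsobR : ∀ k : ℕ, sobNorm d k uR ≤ r ^ (d + 2*k) * sobNorm d k φ := by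
      intro k
      have hint : (∫ ξ : E, (1 + ‖ξ‖ ^ 2) ^ k * ‖ψ (R⁻¹ • ξ)‖ ^ 2)
          ≤ R ^ d * R ^ (2*k) * S k := by
        have h := integral_weight_scale ψ k hR1
        rwa [finrank_euclideanSpace_fin] at h
      have hrw : sobNorm d k uR
          = (∫ ξ : E, (1 + ‖ξ‖ ^ 2) ^ k * ‖ψ (R⁻¹ • ξ)‖ ^ 2) ^ ((1:ℝ)/2) := by
        unfold sobNorm
        congr 1
        apply integral_congr_ae
        filter_upwards with ξ
        rw [Real.rpow_natCast, hF ξ]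
      have h4 : R ^ d * R ^ (2*k) = (r ^ (d + 2*k)) ^ 2 := by
        rw [hRdef, ← pow_mul, ← pow_mul, ← pow_add, ← pow_mul]
        congr 1
        ring
      rw [hrw, hsob k]
      calc (∫ ξ : E, (1 + ‖ξ‖ ^ 2) ^ k * ‖ψ (R⁻¹ • ξ)‖ ^ 2) ^ ((1:ℝ)/2)
          ≤ ((r ^ (d + 2*k)) ^ 2 * S k) ^ ((1:ℝ)/2) := by
            apply Real.rpow_le_rpow
            · apply integral_nonneg; intro ξ; positivity
            · rw [← h4]; exact hint
            · norm_num
        _ = r ^ (d + 2*k) * (S k) ^ ((1:ℝ)/2) := by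
            rw [Real.mul_rpow (by positivity) (hS_nonneg k)]
            congr 1
            rw [← Real.sqrt_eq_rpow, Real.sqrt_sq (by positivity)]
    have hs2 : sobNorm d 2 uR ≤ r ^ (d + 4) * sobNorm d 2 φ := by
      have h := hsobR 2
      norm_num at h
      exact h
    have hs1 : sobNorm d 1 uR ≤ r ^ (d + 2) * sobNorm d 1 φ := by
      have h := hsobR 1
      norm_num at h
      exact h
    -- put everything together
    have happ := hC uR uR uR
    rw [hL] at happ
    have hR2d : R ^ (2*d) = r ^ (4*d) := by
      rw [hRdef, ← pow_mul]; congr 1; ring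
    rw [hR2d] at happ
    have hn2 : 0 ≤ sobNorm d 2 uR := sob_nonneg 2 uR
    have hn1 : 0 ≤ sobNorm d 1 uR := sob_nonneg 1 uR
    have hA2 : 0 ≤ sobNorm d 2 φ := sob_nonneg 2 φ
    have hA1 : 0 ≤ sobNorm d 1 φ := sob_nonneg 1 φ
    calc r ^ (4*d) * c ≤ C * sobNorm d 2 uR * sobNorm d 2 uR * sobNorm d 1 uR := happ
      _ ≤ |C| * (r ^ (d + 4) * sobNorm d 2 φ) * (r ^ (d + 4) * sobNorm d 2 φ)
            * (r ^ (d + 2) * sobNorm d 1 φ) := by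
          have hCle : C ≤ |C| := le_abs_self C
          gcongr
      _ = |C| * (sobNorm d 2 φ * sobNorm d 2 φ * sobNorm d 1 φ) * r ^ (3*d+10) := by
          rw [show (3*d+10) = (d+4) + (d+4) + (d+2) from by ring, pow_add, pow_add]
          ring
  -- derive a contradiction
  set M : ℝ := |C| * (sobNorm d 2 φ * sobNorm d 2 φ * sobNorm d 1 φ) with hMdef
  set r : ℝ := max 1 ((M + 1)/c) with hrdef
  have hr1 : (1:ℝ) ≤ r := le_max_left _ _
  have hr0 : (0:ℝ) < r := lt_of_lt_of_le one_pos hr1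
  have hkey := key r hr1
  have hfac : r ^ (4*d) = r ^ (3*d+10) * r ^ (d-10) := by
    rw [← pow_add]; congr 1; omega
  have hstep : r ^ (d-10) * c ≤ M := by
    have hp : (0:ℝ) < r ^ (3*d+10) := pow_pos hr0 _
    have : r ^ (3*d+10) * (r ^ (d-10) * c) ≤ r ^ (3*d+10) * M := by
      calc r ^ (3*d+10) * (r ^ (d-10) * c) = r ^ (4*d) * c := by rw [hfac]; ring
        _ ≤ M * r ^ (3*d+10) := hkey
        _ = r ^ (3*d+10) * M := by ring
    exact le_of_mul_le_mul_left this hp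
  have hrpow : r ≤ r ^ (d-10) := le_self_pow₀ hr1 (by omega)
  have hrc : r * c ≤ M :=
    le_trans (mul_le_mul_of_nonneg_right hrpow hc.le) hstep
  have h2 : (M + 1)/c ≤ r := le_max_right _ _
  rw [div_le_iff₀ hc] at h2
  linarith
end

section
/- Let ε > 0, ξ > 1, and τ ∈ (d_ε(ξ)/2, 2d_ε(ξ)) where d_ε(ξ) = ξ² + ε²ξ⁴. For each ξ₁ ∈ ℝ, let r(ξ₁) denote the unique negative root of P(x) = 4ε²x³ + |ξ₁|^{2/3}(ε²ξ₁² + 2)x + |(1 + ε²(ξ₁−ξ)²)(ξ₁−ξ)² + τ|. Then there is a constant c(ε) > 0, independent of ξ, such that |r(ξ₁)| ≥ c(ε)·|ξ|^{4/3} for all ξ₁ ∈ ℝ. -/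
set_option maxHeartbeats 1000000


/-- Lower bound `|r(ξ₁)| ≳_ε |ξ|^{4/3}` for the unique negative root of the
cubic `P`, uniformly in `ξ₁` and in `τ ∈ (d_ε(ξ)/2, 2 d_ε(ξ))`. -/
theorem negative_root_lower_bound (ε : ℝ) (hε : 0 < ε) :
    ∃ c > 0, ∀ ξ τ ξ₁ r : ℝ, 1 < ξ →
      (ξ ^ 2 + ε ^ 2 * ξ ^ 4) / 2 < τ → τ < 2 * (ξ ^ 2 + ε ^ 2 * ξ ^ 4) →
      r < 0 →
      4 * ε ^ 2 * r ^ 3 + |ξ₁| ^ ((2 : ℝ) / 3) * (ε ^ 2 * ξ₁ ^ 2 + 2) * r +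
        |(1 + ε ^ 2 * (ξ₁ - ξ) ^ 2) * (ξ₁ - ξ) ^ 2 + τ| = 0 →
      c * ξ ^ ((4 : ℝ) / 3) ≤ |r| := by
  refine ⟨min (1/3) (ε^2 / (64 * (ε^2 + 2))), lt_min (by norm_num) (by positivity), ?_⟩
  intro ξ τ ξ₁ r hξ hτ1 hτ2 hr heq
  have hξ0 : (0:ℝ) < ξ := by linarith
  have hc1 : min (1/3 : ℝ) (ε^2 / (64 * (ε^2 + 2))) ≤ 1/3 := min_le_left _ _
  have hc2 : min (1/3 : ℝ) (ε^2 / (64 * (ε^2 + 2))) ≤ ε^2 / (64 * (ε^2 + 2)) :=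
    min_le_right _ _
  have hc0 : (0:ℝ) < min (1/3 : ℝ) (ε^2 / (64 * (ε^2 + 2))) :=
    lt_min (by norm_num) (by positivity)
  set c := min (1/3 : ℝ) (ε^2 / (64 * (ε^2 + 2))) with hc
  set a := -r with ha
  have ha0 : 0 < a := by simp [ha]; linarith
  have habs : |r| = a := by rw [abs_of_neg hr]
  rw [habs]
  set A := |ξ₁| ^ ((2:ℝ)/3) * (ε^2*ξ₁^2+2) with hA
  have hA0 : 0 ≤ A := by positivity
  have hτ0 : 0 < τ := lt_trans (by positivity) hτ1
  have hBval : |(1 + ε ^ 2 * (ξ₁ - ξ) ^ 2) * (ξ₁ - ξ) ^ 2 + τ|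
      = (1 + ε ^ 2 * (ξ₁ - ξ) ^ 2) * (ξ₁ - ξ) ^ 2 + τ := by
    apply abs_of_pos; positivity
  set B := |(1 + ε ^ 2 * (ξ₁ - ξ) ^ 2) * (ξ₁ - ξ) ^ 2 + τ| with hB
  clear_value c a A B
  have hBeq : B = 4*ε^2*a^3 + A*a := by
    rw [ha]; linear_combination heq
  clear hc heq habs hB
  have hBτ : τ ≤ B := by rw [hBval]; nlinarith [sq_nonneg (ξ₁ - ξ), sq_nonneg (ε*(ξ₁-ξ))]
  have hBξ : ε^2 * ξ^4 / 2 ≤ B := by nlinarith [sq_nonneg ξ]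
  have hBs : ε^2 * (ξ₁ - ξ)^4 ≤ B := by
    rw [hBval]; nlinarith [sq_nonneg (ξ₁ - ξ), sq_nonneg (ε*(ξ₁-ξ)^2)]
  -- rpow facts
  have hx43 : (ξ ^ ((4:ℝ)/3))^3 = ξ^4 := by
    rw [← Real.rpow_natCast (ξ ^ ((4:ℝ)/3)) 3, ← Real.rpow_mul hξ0.le,
      ← Real.rpow_natCast ξ 4]
    norm_num
  have hx43pos : 0 < ξ ^ ((4:ℝ)/3) := Real.rpow_pos_of_pos hξ0 _
  by_cases hcase : B ≤ 8 * ε^2 * a^3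
  · -- cubic term dominates
    have ha3 : ξ^4 / 16 ≤ a^3 := by nlinarith [sq_nonneg ε]
    have key : (c * ξ ^ ((4:ℝ)/3))^3 ≤ a^3 := by
      have h1 : (c * ξ ^ ((4:ℝ)/3))^3 = c^3 * ξ^4 := by rw [mul_pow, hx43]
      rw [h1]
      have h2 : c^3 ≤ (1/3:ℝ)^3 := pow_le_pow_left₀ hc0.le hc1 3
      have h3 : c^3 * ξ^4 ≤ (1/3:ℝ)^3 * ξ^4 :=
        mul_le_mul_of_nonneg_right h2 (by positivity)
      nlinarith [pow_nonneg hξ0.le 4]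
    exact le_of_pow_le_pow_left₀ (by norm_num) ha0.le key
  · -- linear term dominates: 2*A*a ≥ B
    push_neg at hcase
    have hlin : B ≤ 2 * (A * a) := by nlinarith
    have hApos : 0 < A := by
      rcases hA0.lt_or_eq with h | h
      · exact h
      · exfalso; rw [← h] at hlin; nlinarith
    have hcancel : c * ξ ^ ((4:ℝ)/3) * (2 * A) ≤ B → c * ξ ^ ((4:ℝ)/3) ≤ a := by
      intro h
      have h2 : c * ξ ^ ((4:ℝ)/3) * (2 * A) ≤ a * (2 * A) := by
        calc c * ξ ^ ((4:ℝ)/3) * (2 * A) ≤ B := h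
          _ ≤ 2 * (A * a) := hlin
          _ = a * (2 * A) := by ring
      exact le_of_mul_le_mul_right h2 (by positivity)
    apply hcancel
    by_cases hξ₁ : |ξ₁| ≤ 2 * ξ
    · -- small ξ₁
      have h23 : |ξ₁| ^ ((2:ℝ)/3) ≤ (2*ξ) ^ ((2:ℝ)/3) :=
        Real.rpow_le_rpow (abs_nonneg _) hξ₁ (by norm_num)
      have h23' : (2*ξ) ^ ((2:ℝ)/3) ≤ 2 * ξ ^ ((2:ℝ)/3) := by
        rw [Real.mul_rpow (by norm_num) hξ0.le]
        gcongr
        calc (2:ℝ) ^ ((2:ℝ)/3) ≤ (2:ℝ) ^ (1:ℝ) :=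
              Real.rpow_le_rpow_of_exponent_le (by norm_num) (by norm_num)
          _ = 2 := Real.rpow_one 2
      have hsq : ξ₁^2 ≤ 4 * ξ^2 := by nlinarith [sq_abs ξ₁, abs_nonneg ξ₁]
      have hAle : A ≤ (8*ε^2+4) * (ξ ^ ((2:ℝ)/3) * ξ^2) := by
        rw [hA]
        have hf : ε^2*ξ₁^2+2 ≤ (4*ε^2+2) * ξ^2 := by nlinarith [sq_nonneg ε, sq_nonneg ξ]
        calc |ξ₁| ^ ((2:ℝ)/3) * (ε^2*ξ₁^2+2)
            ≤ (2 * ξ ^ ((2:ℝ)/3)) * ((4*ε^2+2) * ξ^2) := by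
              apply mul_le_mul (h23.trans h23') hf (by positivity) (by positivity)
          _ = (8*ε^2+4) * (ξ ^ ((2:ℝ)/3) * ξ^2) := by ring
      have hmul : ξ ^ ((4:ℝ)/3) * ξ ^ ((2:ℝ)/3) = ξ^2 := by
        rw [← Real.rpow_add hξ0, ← Real.rpow_natCast ξ 2]
        norm_num
      have hchain : c * ξ ^ ((4:ℝ)/3) * (2 * A)
          ≤ c * ξ ^ ((4:ℝ)/3) * (2 * ((8*ε^2+4) * (ξ ^ ((2:ℝ)/3) * ξ^2))) := by
        gcongr
      refine hchain.trans (le_trans ?_ hBξ)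
      have hx : ξ ^ ((4:ℝ)/3) * (ξ ^ ((2:ℝ)/3) * ξ^2) = ξ^4 := by
        rw [← mul_assoc, hmul]; ring
      have : c * ξ ^ ((4:ℝ)/3) * (2 * ((8*ε^2+4) * (ξ ^ ((2:ℝ)/3) * ξ^2)))
          = c * (16*ε^2+8) * ξ^4 := by
        linear_combination (c*(16*ε^2+8)) * hx
      rw [this]
      have hcb : c * (16*ε^2+8) ≤ ε^2/2 := by
        have h1 : c * (16*ε^2+8) ≤ (ε^2 / (64 * (ε^2 + 2))) * (16*ε^2+8) := by
          apply mul_le_mul_of_nonneg_right hc2 (by positivity)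
        have h2 : (ε^2 / (64 * (ε^2 + 2))) * (16*ε^2+8) ≤ ε^2/2 := by
          rw [div_mul_eq_mul_div, div_le_div_iff₀ (by positivity) (by norm_num)]
          nlinarith [sq_nonneg ε]
        exact h1.trans h2
      nlinarith [pow_pos hξ0 4]
    · -- large ξ₁
      push_neg at hξ₁
      have hξ₁0 : 0 < |ξ₁| := by linarith
      have h1 : |ξ₁|/2 ≤ |ξ₁ - ξ| := by
        have := abs_sub_abs_le_abs_sub ξ₁ ξ
        rw [abs_of_pos hξ0] at this
        linarith
      have h2 : ξ₁^2/4 ≤ (ξ₁-ξ)^2 := by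
        have hs := mul_self_le_mul_self (by positivity : (0:ℝ) ≤ |ξ₁|/2) h1
        nlinarith [abs_mul_abs_self ξ₁, abs_mul_abs_self (ξ₁-ξ)]
      have h4 : ξ₁^4/16 ≤ (ξ₁-ξ)^4 := by
        have hs := mul_self_le_mul_self (by positivity : (0:ℝ) ≤ ξ₁^2/4) h2
        nlinarith [hs]
      have hBbig : ε^2 * ξ₁^4 / 16 ≤ B := by
        have := mul_le_mul_of_nonneg_left h4 (sq_nonneg ε)
        linarith
      have hAle : A ≤ (ε^2+2) * (|ξ₁| ^ ((2:ℝ)/3) * ξ₁^2) := by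
        rw [hA]
        have hξ₁1 : 1 ≤ ξ₁^2 := by nlinarith [sq_abs ξ₁]
        have hf : ε^2*ξ₁^2+2 ≤ (ε^2+2) * ξ₁^2 := by nlinarith [sq_nonneg ε]
        calc |ξ₁| ^ ((2:ℝ)/3) * (ε^2*ξ₁^2+2)
            ≤ |ξ₁| ^ ((2:ℝ)/3) * ((ε^2+2) * ξ₁^2) := by
              apply mul_le_mul_of_nonneg_left hf (by positivity)
          _ = (ε^2+2) * (|ξ₁| ^ ((2:ℝ)/3) * ξ₁^2) := by ring
      have hx43le : ξ ^ ((4:ℝ)/3) ≤ |ξ₁| ^ ((4:ℝ)/3) :=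
        Real.rpow_le_rpow hξ0.le (by linarith) (by norm_num)
      have hmul : |ξ₁| ^ ((4:ℝ)/3) * |ξ₁| ^ ((2:ℝ)/3) = ξ₁^2 := by
        rw [← Real.rpow_add hξ₁0, ← sq_abs ξ₁, ← Real.rpow_natCast |ξ₁| 2]
        norm_num
      have hchain : c * ξ ^ ((4:ℝ)/3) * (2 * A)
          ≤ c * |ξ₁| ^ ((4:ℝ)/3) * (2 * ((ε^2+2) * (|ξ₁| ^ ((2:ℝ)/3) * ξ₁^2))) := by
        gcongr
      refine hchain.trans (le_trans ?_ hBbig)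
      have hx : |ξ₁| ^ ((4:ℝ)/3) * (|ξ₁| ^ ((2:ℝ)/3) * ξ₁^2) = ξ₁^4 := by
        rw [← mul_assoc, hmul]; ring
      have heq2 : c * |ξ₁| ^ ((4:ℝ)/3) * (2 * ((ε^2+2) * (|ξ₁| ^ ((2:ℝ)/3) * ξ₁^2)))
          = c * (2*(ε^2+2)) * ξ₁^4 := by
        linear_combination (c*(2*(ε^2+2))) * hx
      rw [heq2]
      have hcb : c * (2*(ε^2+2)) ≤ ε^2/16 := by
        have h1 : c * (2*(ε^2+2)) ≤ (ε^2 / (64 * (ε^2 + 2))) * (2*(ε^2+2)) := by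
          apply mul_le_mul_of_nonneg_right hc2 (by positivity)
        have h2 : (ε^2 / (64 * (ε^2 + 2))) * (2*(ε^2+2)) = ε^2/32 := by
          field_simp; ring
        rw [h2] at h1
        linarith [sq_nonneg ε]
      have hp : (0:ℝ) ≤ ξ₁^4 := by positivity
      have hfin := mul_le_mul_of_nonneg_right hcb hp
      linarith
end

section
/- Let ε > 0, ξ > 1, τ ∈ (d_ε(ξ)/2, 2d_ε(ξ)) with d_ε(ξ) = ξ² + ε²ξ⁴, and let r(ξ₁) be the unique negative root of P(x) = 4ε²x³ + |ξ₁|^{2/3}(ε²ξ₁² + 2)x + |(1 + ε²(ξ₁−ξ)²)(ξ₁−ξ)² + τ|. Then |r(ξ₁)| ≲_ε d_ε(ξ)^{1/3} for |ξ₁| ∈ [0, ξ/2], and |r(ξ₁)| ≲_ε |ξ₁|^{1/3}⟨εξ₁⟩ otherwise. -/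
private lemma cube_rpow_third (a : ℝ) (ha : 0 ≤ a) : (a ^ ((1:ℝ)/3)) ^ 3 = a := by
  rw [← Real.rpow_natCast (a ^ ((1:ℝ)/3)) 3, ← Real.rpow_mul ha]
  norm_num

set_option maxHeartbeats 1600000 in
/-- Upper bounds on the unique negative root of the cubic `P`:
`|r(ξ₁)| ≲_ε d_ε(ξ)^{1/3}` for `|ξ₁| ≤ ξ/2`, and
`|r(ξ₁)| ≲_ε |ξ₁|^{1/3}⟨εξ₁⟩` otherwise. -/
theorem negative_root_upper_bound (ε : ℝ) (hε : 0 < ε) :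
    ∃ c > 0, ∀ ξ τ ξ₁ r : ℝ, 1 < ξ →
      (ξ ^ 2 + ε ^ 2 * ξ ^ 4) / 2 < τ → τ < 2 * (ξ ^ 2 + ε ^ 2 * ξ ^ 4) →
      r < 0 →
      4 * ε ^ 2 * r ^ 3 + |ξ₁| ^ ((2 : ℝ) / 3) * (ε ^ 2 * ξ₁ ^ 2 + 2) * r +
        |(1 + ε ^ 2 * (ξ₁ - ξ) ^ 2) * (ξ₁ - ξ) ^ 2 + τ| = 0 →
      (|ξ₁| ≤ ξ / 2 → |r| ≤ c * (ξ ^ 2 + ε ^ 2 * ξ ^ 4) ^ ((1 : ℝ) / 3)) ∧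
      (ξ / 2 < |ξ₁| → |r| ≤ c * |ξ₁| ^ ((1 : ℝ) / 3) * Real.sqrt (1 + (ε * ξ₁) ^ 2)) := by
  set C0 : ℝ := 113 / ε ^ 3 + 113 / ε ^ 2 + 1 with hC0def
  have hC0pos : 0 < C0 := by positivity
  have hC : ε ^ 3 * C0 = 113 + 113 * ε + ε ^ 3 := by
    rw [hC0def]; field_simp
  clear_value C0
  refine ⟨C0 ^ ((1:ℝ)/3), Real.rpow_pos_of_pos hC0pos _, ?_⟩
  intro ξ τ ξ₁ r hξ hτ1 hτ2 hr heq
  have hξ0 : 0 < ξ := by linarith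
  have hd : 0 < ξ ^ 2 + ε ^ 2 * ξ ^ 4 := by positivity
  have hτ0 : 0 < τ := by nlinarith
  have hBabs : |(1 + ε ^ 2 * (ξ₁ - ξ) ^ 2) * (ξ₁ - ξ) ^ 2 + τ|
      = (1 + ε ^ 2 * (ξ₁ - ξ) ^ 2) * (ξ₁ - ξ) ^ 2 + τ := by
    apply abs_of_nonneg; positivity
  rw [hBabs] at heq
  have hA : 0 ≤ |ξ₁| ^ ((2:ℝ)/3) * (ε ^ 2 * ξ₁ ^ 2 + 2) := by positivity
  have hnr : 0 < -r := by linarith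
  have hkey : 4 * ε ^ 2 * (-r) ^ 3 ≤ (1 + ε ^ 2 * (ξ₁ - ξ) ^ 2) * (ξ₁ - ξ) ^ 2 + τ := by
    nlinarith [mul_nonneg hA hnr.le]
  have habs : |r| = -r := abs_of_neg hr
  constructor
  · intro h1
    have hx := abs_le.mp h1
    have hu : (ξ₁ - ξ) ^ 2 ≤ 9/4 * ξ ^ 2 := by nlinarith [hx.1, hx.2]
    have hBle : (1 + ε ^ 2 * (ξ₁ - ξ) ^ 2) * (ξ₁ - ξ) ^ 2 + τ
        ≤ 8 * (ξ ^ 2 + ε ^ 2 * ξ ^ 4) := by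
      have hsq : ((ξ₁ - ξ) ^ 2) * ((ξ₁ - ξ) ^ 2) ≤ (9/4 * ξ ^ 2) * (9/4 * ξ ^ 2) :=
        mul_le_mul hu hu (sq_nonneg _) (by positivity)
      nlinarith [mul_le_mul_of_nonneg_left hsq (sq_nonneg ε), sq_nonneg ε,
        mul_le_mul_of_nonneg_left hu (sq_nonneg ε)]
    have hcube : (-r) ^ 3 ≤ C0 * (ξ ^ 2 + ε ^ 2 * ξ ^ 4) := by
      have hpos : (0:ℝ) < 4 * ε ^ 3 := by positivity
      have hmain : 4 * ε ^ 3 * ((-r) ^ 3) ≤ 4 * ε ^ 3 * (C0 * (ξ ^ 2 + ε ^ 2 * ξ ^ 4)) := by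
        have e1 := mul_le_mul_of_nonneg_left (hkey.trans hBle) hε.le
        have e2 : (0:ℝ) ≤ 4 * ε ^ 3 * C0 - 8 * ε := by nlinarith
        nlinarith [mul_nonneg e2 hd.le]
      exact le_of_mul_le_mul_left hmain hpos
    rw [habs]
    refine le_of_pow_le_pow_left₀ (n := 3) (by norm_num) (by positivity) ?_
    rw [mul_pow, cube_rpow_third C0 hC0pos.le, cube_rpow_third _ hd.le]
    exact hcube
  · intro h2
    set s : ℝ := Real.sqrt (1 + (ε * ξ₁) ^ 2) with hsdef
    have hs0 : 0 < s := Real.sqrt_pos.mpr (by positivity)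
    have hs2 : s ^ 2 = 1 + (ε * ξ₁) ^ 2 := Real.sq_sqrt (by positivity)
    have hεξ : ε * |ξ₁| ≤ s := by
      rw [← abs_of_pos hε, ← abs_mul]
      nlinarith [abs_nonneg (ε * ξ₁), sq_abs (ε * ξ₁)]
    have hξ1pos : 0 < |ξ₁| := lt_of_le_of_lt (by positivity) h2
    have hξle : ξ ≤ 2 * |ξ₁| := by linarith
    have hxu : (ξ₁ - ξ) ^ 2 ≤ 9 * ξ₁ ^ 2 := by
      have h1 : |ξ₁ - ξ| ≤ 3 * |ξ₁| := by
        calc |ξ₁ - ξ| ≤ |ξ₁| + |ξ| := abs_sub _ _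
          _ ≤ 3 * |ξ₁| := by rw [abs_of_pos hξ0]; linarith
      calc (ξ₁ - ξ) ^ 2 = |ξ₁ - ξ| ^ 2 := (sq_abs _).symm
        _ ≤ (3 * |ξ₁|) ^ 2 := by nlinarith [abs_nonneg (ξ₁ - ξ)]
        _ = 9 * ξ₁ ^ 2 := by rw [mul_pow, sq_abs]; ring
    have hξsq : ξ ^ 2 ≤ 4 * ξ₁ ^ 2 := by
      calc ξ ^ 2 ≤ (2 * |ξ₁|) ^ 2 := by nlinarith
        _ = 4 * ξ₁ ^ 2 := by rw [mul_pow, sq_abs]; ring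
    have hξ4 : ξ ^ 4 ≤ 16 * ξ₁ ^ 4 := by nlinarith [sq_nonneg ξ, sq_nonneg ξ₁]
    have hBle : (1 + ε ^ 2 * (ξ₁ - ξ) ^ 2) * (ξ₁ - ξ) ^ 2 + τ
        ≤ 113 * (ξ₁ ^ 2 * s ^ 2) := by
      have : (1 + ε ^ 2 * (ξ₁ - ξ) ^ 2) * (ξ₁ - ξ) ^ 2 + τ
          ≤ 113 * (ξ₁ ^ 2 + ε ^ 2 * ξ₁ ^ 4) := by
        nlinarith [mul_nonneg (sq_nonneg ε) (sq_nonneg (ξ₁ - ξ)), sq_nonneg (ξ₁-ξ),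
          mul_le_mul_of_nonneg_left hxu (sq_nonneg ε)]
      calc (1 + ε ^ 2 * (ξ₁ - ξ) ^ 2) * (ξ₁ - ξ) ^ 2 + τ
          ≤ 113 * (ξ₁ ^ 2 + ε ^ 2 * ξ₁ ^ 4) := this
        _ = 113 * (ξ₁ ^ 2 * s ^ 2) := by rw [hs2]; ring
    have hεB : ε * ((1 + ε ^ 2 * (ξ₁ - ξ) ^ 2) * (ξ₁ - ξ) ^ 2 + τ)
        ≤ 113 * (|ξ₁| * s ^ 3) := by
      have h3 : ε * (ξ₁ ^ 2 * s ^ 2) ≤ |ξ₁| * s ^ 3 := by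
        have : ε * |ξ₁| * (|ξ₁| * s ^ 2) ≤ s * (|ξ₁| * s ^ 2) := by
          apply mul_le_mul_of_nonneg_right hεξ; positivity
        calc ε * (ξ₁ ^ 2 * s ^ 2) = ε * |ξ₁| * (|ξ₁| * s ^ 2) := by
              rw [← sq_abs ξ₁]; ring
          _ ≤ s * (|ξ₁| * s ^ 2) := this
          _ = |ξ₁| * s ^ 3 := by ring
      nlinarith [mul_le_mul_of_nonneg_left hBle hε.le]
    have hcube : (-r) ^ 3 ≤ C0 * (|ξ₁| * s ^ 3) := by
      have hpos : (0:ℝ) < 4 * ε ^ 3 := by positivity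
      have h5 : (0:ℝ) ≤ |ξ₁| * s ^ 3 := by positivity
      have hmain : 4 * ε ^ 3 * ((-r) ^ 3) ≤ 4 * ε ^ 3 * (C0 * (|ξ₁| * s ^ 3)) := by
        have e1 := mul_le_mul_of_nonneg_left hkey hε.le
        have e2 : (0:ℝ) ≤ 4 * ε ^ 3 * C0 - 113 := by nlinarith
        nlinarith [mul_nonneg e2 h5]
      exact le_of_mul_le_mul_left hmain hpos
    rw [habs]
    have hrhs : (C0 ^ ((1:ℝ)/3) * |ξ₁| ^ ((1:ℝ)/3) * s) ^ 3 = C0 * (|ξ₁| * s ^ 3) := by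
      rw [mul_pow, mul_pow, cube_rpow_third C0 hC0pos.le,
        cube_rpow_third _ (abs_nonneg ξ₁)]
      ring
    refine le_of_pow_le_pow_left₀ (n := 3) (by norm_num) (by positivity) ?_
    rw [hrhs]
    exact hcube
end

section
/- Let ε > 0, b > 1/2, and let r < 0 be the unique negative root of P(x) = 4ε²x³ + Bx + C where B = |ξ₁|^{2/3}(ε²ξ₁² + 2) > 0 and C ≥ 0 (for fixed ξ₁ ≠ 0). Then on x ∈ (−∞, r), the Taylor expansion of P at x = r gives |P(x)| ≥ max(B·(r − x), 4ε²(r − x)³), and consequently |ξ₁|^{−1/3} ∫_{−∞}^r dx/⟨P(x)⟩^{2b} ≲_{b,ε} min( 1/(|ξ₁|(ε²ξ₁² + 2)), |ξ₁|^{−1/3} ). -/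
open MeasureTheory

lemma aux_integrable_one_add_sq (b : ℝ) (hb : 1 / 2 < b) :
    Integrable (fun x : ℝ => (1 + x ^ 2) ^ (-b)) := by
  have h := integrable_rpow_neg_one_add_norm_sq (E := ℝ) (μ := volume) (r := 2 * b)
    (by simp [Module.finrank_self]; linarith)
  simpa [Real.norm_eq_abs, sq_abs, show (-(2 * b) / 2 : ℝ) = -b from by ring] using h

set_option maxHeartbeats 1000000 in
/-- On `(-∞, r)`, the Taylor expansion at the negative root `r` gives the lower
bound `|P(x)| ≥ max(B(r−x), 4ε²(r−x)³)`, and consequently the weighted integral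
bound holds. -/
theorem taylor_lower_bound_and_integral (ε b : ℝ) (hε : 0 < ε) (hb : 1 / 2 < b) :
    ∃ K > 0, ∀ ξ₁ C r : ℝ, ξ₁ ≠ 0 → 0 ≤ C → r < 0 →
      4 * ε ^ 2 * r ^ 3 + (|ξ₁| ^ ((2 : ℝ) / 3) * (ε ^ 2 * ξ₁ ^ 2 + 2)) * r + C = 0 →
      (∀ x < r,
        max ((|ξ₁| ^ ((2 : ℝ) / 3) * (ε ^ 2 * ξ₁ ^ 2 + 2)) * (r - x))
            (4 * ε ^ 2 * (r - x) ^ 3)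
          ≤ |4 * ε ^ 2 * x ^ 3 + (|ξ₁| ^ ((2 : ℝ) / 3) * (ε ^ 2 * ξ₁ ^ 2 + 2)) * x + C|) ∧
      |ξ₁| ^ (-(1 : ℝ) / 3) *
          ∫ x in Set.Iio r,
            Real.sqrt (1 + (4 * ε ^ 2 * x ^ 3 +
              (|ξ₁| ^ ((2 : ℝ) / 3) * (ε ^ 2 * ξ₁ ^ 2 + 2)) * x + C) ^ 2) ^ (-(2 * b))
        ≤ K * min (1 / (|ξ₁| * (ε ^ 2 * ξ₁ ^ 2 + 2))) (|ξ₁| ^ (-(1 : ℝ) / 3)) := by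
  have hI := aux_integrable_one_add_sq b hb
  set I : ℝ := ∫ x : ℝ, (1 + x ^ 2) ^ (-b) with hIdef
  have hI0 : 0 ≤ I := integral_nonneg fun x => Real.rpow_nonneg (by positivity) _
  set m : ℝ := min 1 (16 * ε ^ 4) with hmdef
  have hm0 : 0 < m := lt_min one_pos (by positivity)
  set c₀ : ℝ := (m / 2) ^ (-b) with hc₀def
  have hc₀0 : 0 < c₀ := Real.rpow_pos_of_pos (by positivity) _
  have hm1 : m ≤ 1 := min_le_left _ _
  have hm2 : m ≤ 16 * ε ^ 4 := min_le_right _ _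
  have hc₀eq : c₀ = (m / 2) ^ (-b) := hc₀def
  clear_value m c₀
  refine ⟨I + c₀ * I + 1, by positivity, ?_⟩
  intro ξ₁ C r hξ hC hr hroot
  set B : ℝ := |ξ₁| ^ ((2 : ℝ) / 3) * (ε ^ 2 * ξ₁ ^ 2 + 2) with hBdef
  have hξ0 : 0 < |ξ₁| := abs_pos.mpr hξ
  have hB : 0 < B := by
    apply mul_pos (Real.rpow_pos_of_pos hξ0 _) (by positivity)
  set P : ℝ → ℝ := fun x => 4 * ε ^ 2 * x ^ 3 + B * x + C with hPdef
  clear_value B P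
  simp only [show ∀ y : ℝ, 4 * ε ^ 2 * y ^ 3 + B * y + C = P y from fun y => by rw [hPdef]]
  -- pointwise lower bound
  have key : ∀ x < r, B * (r - x) ≤ |P x| ∧ 4 * ε ^ 2 * (r - x) ^ 3 ≤ |P x| := by
    intro x hx
    have hx0 : x < 0 := hx.trans hr
    have hPx : P x = (x - r) * (4 * ε ^ 2 * (x ^ 2 + x * r + r ^ 2) + B) := by
      simp only [hPdef]
      linear_combination hroot
    have hq0 : 0 ≤ x ^ 2 + x * r + r ^ 2 := by nlinarith [sq_nonneg (x + r), sq_nonneg x, sq_nonneg r]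
    have hq1 : (r - x) ^ 2 ≤ x ^ 2 + x * r + r ^ 2 := by nlinarith [mul_pos (neg_pos.mpr hx0) (neg_pos.mpr hr)]
    have hneg : P x < 0 := by
      rw [hPx]
      apply mul_neg_of_neg_of_pos (by linarith)
      nlinarith
    have habs : |P x| = (r - x) * (4 * ε ^ 2 * (x ^ 2 + x * r + r ^ 2) + B) := by
      rw [abs_of_neg hneg, hPx]; ring
    constructor
    · rw [habs]
      nlinarith [mul_nonneg (show (0:ℝ) ≤ r - x by linarith)
        (mul_nonneg (by positivity : (0:ℝ) ≤ 4 * ε ^ 2) hq0)]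
    · rw [habs]
      have hrx : 0 < r - x := by linarith
      nlinarith [mul_le_mul_of_nonneg_left hq1 (le_of_lt (mul_pos hrx (by positivity : (0:ℝ) < 4 * ε ^ 2)))]
  refine ⟨fun x hx => max_le (key x hx).1 ((key x hx).2), ?_⟩
  -- rewrite the integrand
  have hrw : ∀ x : ℝ, Real.sqrt (1 + (P x) ^ 2) ^ (-(2 * b)) = (1 + (P x) ^ 2) ^ (-b) := by
    intro x
    rw [Real.sqrt_eq_rpow, ← Real.rpow_mul (by positivity)]
    congr 1
    ring
  have hcont : Continuous fun x : ℝ => (1 + (P x) ^ 2) ^ (-b) := by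
    apply Continuous.rpow_const (by rw [hPdef]; fun_prop)
    intro x; left; positivity
  set g1 : ℝ → ℝ := fun x => (1 + (B * (x - r)) ^ 2) ^ (-b) with hg1def
  set g2 : ℝ → ℝ := fun x => c₀ * (1 + (x - r) ^ 2) ^ (-b) with hg2def
  have hg1int : Integrable g1 := by
    have h1 : Integrable (fun x : ℝ => (1 + (B * x) ^ 2) ^ (-b)) :=
      hI.comp_mul_left' hB.ne'
    exact h1.comp_sub_right r
  have hg2int : Integrable g2 := (hI.comp_sub_right r).const_mul c₀
  have hfnonneg : ∀ x : ℝ, 0 ≤ (1 + (P x) ^ 2) ^ (-b) :=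
    fun x => Real.rpow_nonneg (by positivity) _
  have hbound1 : ∀ x ∈ Set.Iio r, (1 + (P x) ^ 2) ^ (-b) ≤ g1 x := by
    intro x hx
    rw [Set.mem_Iio] at hx
    have h := (key x hx).1
    apply Real.rpow_le_rpow_of_nonpos (by positivity) _ (by linarith)
    have hnn : 0 ≤ B * (r - x) := mul_nonneg hB.le (by linarith)
    have : (B * (x - r)) ^ 2 ≤ (P x) ^ 2 := by
      calc (B * (x - r)) ^ 2 = (B * (r - x)) ^ 2 := by ring
        _ ≤ |P x| ^ 2 := pow_le_pow_left₀ hnn h 2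
        _ = (P x) ^ 2 := sq_abs (P x)
    linarith
  have hbound2 : ∀ x ∈ Set.Iio r, (1 + (P x) ^ 2) ^ (-b) ≤ g2 x := by
    intro x hx
    rw [Set.mem_Iio] at hx
    have h := (key x hx).2
    have hrx : 0 < r - x := by linarith
    have hsq : 16 * ε ^ 4 * (r - x) ^ 6 ≤ (P x) ^ 2 := by
      calc 16 * ε ^ 4 * (r - x) ^ 6 = (4 * ε ^ 2 * (r - x) ^ 3) ^ 2 := by ring
        _ ≤ |P x| ^ 2 :=
            pow_le_pow_left₀ (mul_nonneg (by positivity) (pow_nonneg hrx.le 3)) h 2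
        _ = (P x) ^ 2 := sq_abs (P x)
    have hmid : m / 2 * (1 + (x - r) ^ 2) ≤ 1 + (P x) ^ 2 := by
      have hxr : (x - r) ^ 2 = (r - x) ^ 2 := by ring
      rw [hxr]
      rcases le_or_gt (r - x) 1 with hc | hc
      · nlinarith [sq_nonneg (r - x), pow_nonneg hrx.le 6]
      · have h6 : (r - x) ^ 2 ≤ (r - x) ^ 6 :=
          pow_le_pow_right₀ hc.le (by norm_num)
        have e1 : m * (r - x) ^ 2 ≤ m * (r - x) ^ 6 :=
          mul_le_mul_of_nonneg_left h6 hm0.le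
        have e2 : m * (r - x) ^ 6 ≤ 16 * ε ^ 4 * (r - x) ^ 6 :=
          mul_le_mul_of_nonneg_right hm2 (pow_nonneg hrx.le 6)
        have e3 : m * (r - x) ^ 2 ≤ P x ^ 2 := le_trans e1 (le_trans e2 hsq)
        have e4 : (0:ℝ) ≤ P x ^ 2 := sq_nonneg _
        linarith
    calc (1 + (P x) ^ 2) ^ (-b) ≤ (m / 2 * (1 + (x - r) ^ 2)) ^ (-b) :=
          Real.rpow_le_rpow_of_nonpos (by positivity) hmid (by linarith)
      _ = c₀ * (1 + (x - r) ^ 2) ^ (-b) := by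
          rw [Real.mul_rpow (by positivity) (by positivity), hc₀eq]
  have hfint : IntegrableOn (fun x : ℝ => (1 + (P x) ^ 2) ^ (-b)) (Set.Iio r) := by
    apply (hg1int.integrableOn).mono' hcont.aestronglyMeasurable.restrict
    filter_upwards [ae_restrict_mem measurableSet_Iio] with x hx
    rw [Real.norm_eq_abs, abs_of_nonneg (hfnonneg x)]
    exact hbound1 x hx
  set S : ℝ := ∫ x in Set.Iio r, (1 + (P x) ^ 2) ^ (-b) with hSdef
  have hSrw : (∫ x in Set.Iio r, Real.sqrt (1 + (P x) ^ 2) ^ (-(2 * b))) = S := by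
    apply setIntegral_congr_fun measurableSet_Iio
    intro x _; exact hrw x
  have hS0 : 0 ≤ S := setIntegral_nonneg measurableSet_Iio fun x _ => hfnonneg x
  have hg1val : (∫ x : ℝ, g1 x) = B⁻¹ * I := by
    rw [show (fun x : ℝ => g1 x) = (fun x : ℝ => (fun y : ℝ => (1 + (B * y) ^ 2) ^ (-b)) (x - r)) from rfl,
      integral_sub_right_eq_self (fun y : ℝ => (1 + (B * y) ^ 2) ^ (-b)) r,
      MeasureTheory.Measure.integral_comp_mul_left (fun y : ℝ => (1 + y ^ 2) ^ (-b)) B,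
      abs_of_pos (inv_pos.mpr hB), smul_eq_mul]
  have hg2val : (∫ x : ℝ, g2 x) = c₀ * I := by
    rw [show (fun x : ℝ => g2 x) = (fun x : ℝ => c₀ * (fun y : ℝ => (1 + y ^ 2) ^ (-b)) (x - r)) from rfl,
      integral_const_mul, integral_sub_right_eq_self (fun y : ℝ => (1 + y ^ 2) ^ (-b)) r]
  have hS1 : S ≤ B⁻¹ * I := by
    rw [← hg1val]
    calc S ≤ ∫ x in Set.Iio r, g1 x :=
          setIntegral_mono_on hfint hg1int.integrableOn measurableSet_Iio hbound1
      _ ≤ ∫ x : ℝ, g1 x :=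
          setIntegral_le_integral hg1int (ae_of_all _ fun x => Real.rpow_nonneg (by positivity) _)
  have hS2 : S ≤ c₀ * I := by
    rw [← hg2val]
    calc S ≤ ∫ x in Set.Iio r, g2 x :=
          setIntegral_mono_on hfint hg2int.integrableOn measurableSet_Iio hbound2
      _ ≤ ∫ x : ℝ, g2 x :=
          setIntegral_le_integral hg2int
            (ae_of_all _ fun x => mul_nonneg hc₀0.le (Real.rpow_nonneg (by positivity) _))
  rw [hSrw]
  have hx13 : (0:ℝ) < |ξ₁| ^ (-(1:ℝ) / 3) := Real.rpow_pos_of_pos hξ0 _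
  have hmin1 : |ξ₁| ^ (-(1:ℝ) / 3) * S ≤ I * (1 / (|ξ₁| * (ε ^ 2 * ξ₁ ^ 2 + 2))) := by
    have h1 : |ξ₁| ^ (-(1:ℝ) / 3) * S ≤ |ξ₁| ^ (-(1:ℝ) / 3) * (B⁻¹ * I) :=
      mul_le_mul_of_nonneg_left hS1 hx13.le
    have hpow : |ξ₁| ^ (-(1:ℝ) / 3) * (|ξ₁| ^ ((2:ℝ)/3))⁻¹ = |ξ₁|⁻¹ := by
      rw [← Real.rpow_neg hξ0.le, ← Real.rpow_add hξ0,
        show (-(1:ℝ)/3 + -((2:ℝ)/3)) = -1 by norm_num, Real.rpow_neg_one]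
    have h2 : |ξ₁| ^ (-(1:ℝ) / 3) * B⁻¹ = 1 / (|ξ₁| * (ε ^ 2 * ξ₁ ^ 2 + 2)) := by
      rw [hBdef, mul_inv, ← mul_assoc, hpow, one_div, mul_inv]
    calc |ξ₁| ^ (-(1:ℝ) / 3) * S ≤ |ξ₁| ^ (-(1:ℝ) / 3) * (B⁻¹ * I) := h1
      _ = (|ξ₁| ^ (-(1:ℝ) / 3) * B⁻¹) * I := by ring
      _ = I * (1 / (|ξ₁| * (ε ^ 2 * ξ₁ ^ 2 + 2))) := by rw [h2]; ring
  have hmin2 : |ξ₁| ^ (-(1:ℝ) / 3) * S ≤ (c₀ * I) * (|ξ₁| ^ (-(1:ℝ) / 3)) := by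
    calc |ξ₁| ^ (-(1:ℝ) / 3) * S ≤ |ξ₁| ^ (-(1:ℝ) / 3) * (c₀ * I) :=
          mul_le_mul_of_nonneg_left hS2 hx13.le
      _ = (c₀ * I) * (|ξ₁| ^ (-(1:ℝ) / 3)) := by ring
  have hc0I : (0:ℝ) ≤ c₀ * I := by positivity
  have hKI : I ≤ I + c₀ * I + 1 := by linarith
  have hKc : c₀ * I ≤ I + c₀ * I + 1 := by linarith
  have hA0 : 0 ≤ 1 / (|ξ₁| * (ε ^ 2 * ξ₁ ^ 2 + 2)) := by positivity
  rw [show (I + c₀ * I + 1) * min (1 / (|ξ₁| * (ε ^ 2 * ξ₁ ^ 2 + 2))) (|ξ₁| ^ (-(1:ℝ) / 3)) =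
      min ((I + c₀ * I + 1) * (1 / (|ξ₁| * (ε ^ 2 * ξ₁ ^ 2 + 2))))
        ((I + c₀ * I + 1) * (|ξ₁| ^ (-(1:ℝ) / 3))) from
      (mul_min_of_nonneg _ _ (by positivity))]
  apply le_min
  · exact hmin1.trans (mul_le_mul_of_nonneg_right hKI hA0)
  · exact hmin2.trans (mul_le_mul_of_nonneg_right hKc hx13.le)
end

section
/- Let 0 < a < 4/3 and p ∈ [1, 3) with 3 − 1/p > 0. There is a constant C(ε, p) such that for all ξ > 1: ∫_0^∞ ⟨εξ₁⟩^{−4} |ξ₁|^{−1/3} / (12ε²r(ξ₁)² + |ξ₁|^{2/3}(ε²ξ₁² + 2)) dξ₁ ≤ C(ε,p)·⟨ξ⟩^{−(3 − 1/p)}, where r(ξ₁) satisfies |r(ξ₁)| ≳_ε |ξ|^{4/3} uniformly in ξ₁. -/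
/-!
The lower bound `|r(ξ₁)| ≥ c₀ ξ^{4/3}` bounds the denominator below by `12 ε² c₀² ξ^{8/3}`
uniformly in `ξ₁`, so the integral is at most a constant times `ξ^{-8/3}`: the remaining weight
`⟨εξ₁⟩^{-4} ξ₁^{-1/3}` is integrable on `(0, ∞)`. Since `p < 3` the exponent `3 - 1/p` is at
most `8/3`, and `ξ^{-8/3} ≲ ⟨ξ⟩^{-(3 - 1/p)}` for `ξ ≥ 1`.
-/

open MeasureTheory Set

lemma sqrt_one_add_sq_rpow_neg_le {u t : ℝ} (hu : u ≠ 0) (ht : 0 ≤ t) :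
    Real.sqrt (1 + u ^ 2) ^ (-t) ≤ |u| ^ (-t) :=
  Real.rpow_le_rpow_of_nonpos (abs_pos.mpr hu) (Real.abs_le_sqrt (by linarith))
    (neg_nonpos.mpr ht)

/-- Near `0` the weight is bounded by `x ^ s`, near `∞` by `|ε|^{-t} x ^ (s - t)`. -/
lemma integrableOn_Ioi_sqrt_one_add_sq_rpow_neg_mul_rpow {ε s t : ℝ} (hε : ε ≠ 0)
    (hs : -1 < s) (hst : s - t < -1) :
    IntegrableOn (fun x => Real.sqrt (1 + (ε * x) ^ 2) ^ (-t) * x ^ s) (Ioi 0) := by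
  have ht : 0 ≤ t := by linarith
  have hmeas : AEStronglyMeasurable (fun x => Real.sqrt (1 + (ε * x) ^ 2) ^ (-t) * x ^ s) :=
    by fun_prop
  have hweight_le_one : ∀ x, Real.sqrt (1 + (ε * x) ^ 2) ^ (-t) ≤ 1 := fun x =>
    Real.rpow_le_one_of_one_le_of_nonpos (Real.le_sqrt_of_sq_le (by nlinarith))
      (neg_nonpos.mpr ht)
  have hnear : IntegrableOn (fun x => Real.sqrt (1 + (ε * x) ^ 2) ^ (-t) * x ^ s) (Ioc 0 1) := by
    refine ((intervalIntegrable_iff_integrableOn_Ioc_of_le zero_le_one).mp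
      (intervalIntegral.intervalIntegrable_rpow' hs)).mono' hmeas.restrict ?_
    filter_upwards [ae_restrict_mem measurableSet_Ioc] with x hx
    rw [Real.norm_of_nonneg (mul_nonneg (by positivity) (Real.rpow_nonneg hx.1.le _))]
    exact mul_le_of_le_one_left (Real.rpow_nonneg hx.1.le _) (hweight_le_one x)
  have hfar : IntegrableOn (fun x => Real.sqrt (1 + (ε * x) ^ 2) ^ (-t) * x ^ s) (Ioi 1) := by
    refine ((integrableOn_Ioi_rpow_of_lt hst one_pos).const_mul (|ε| ^ (-t))).mono'
      hmeas.restrict ?_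
    filter_upwards [ae_restrict_mem measurableSet_Ioi] with x hx
    have hx0 : 0 < x := zero_lt_one.trans hx
    rw [Real.norm_of_nonneg (by positivity), sub_eq_add_neg, Real.rpow_add hx0, mul_comm (x ^ s),
      ← mul_assoc, ← Real.mul_rpow (abs_nonneg ε) hx0.le, ← abs_of_pos hx0, ← abs_mul,
      abs_of_pos hx0]
    exact mul_le_mul_of_nonneg_right
      (sqrt_one_add_sq_rpow_neg_le (mul_ne_zero hε hx0.ne') ht) (Real.rpow_nonneg hx0.le _)
  simpa [Ioc_union_Ioi_eq_Ioi zero_le_one] using hnear.union hfar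

lemma setIntegral_div_le_of_le {α : Type*} [MeasurableSpace α] {μ : Measure α} {s : Set α}
    {f D : α → ℝ} {D₀ : ℝ} (hs : MeasurableSet s) (hf : IntegrableOn f s μ)
    (hf0 : ∀ x ∈ s, 0 ≤ f x) (hD₀ : 0 < D₀) (hD : ∀ x ∈ s, D₀ ≤ D x) :
    ∫ x in s, f x / D x ∂μ ≤ (∫ x in s, f x ∂μ) / D₀ := by
  rw [← integral_div]
  refine integral_mono_of_nonneg ?_ (hf.div_const D₀) ?_
  · filter_upwards [ae_restrict_mem hs] with x hx
    exact div_nonneg (hf0 x hx) (hD₀.le.trans (hD x hx))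
  · filter_upwards [ae_restrict_mem hs] with x hx
    exact div_le_div_of_nonneg_left (hf0 x hx) hD₀ (hD x hx)

lemma rpow_neg_le_mul_sqrt_one_add_sq_rpow_neg {ξ s σ : ℝ} (hξ : 1 ≤ ξ) (hs : 0 ≤ s)
    (hsσ : s ≤ σ) :
    ξ ^ (-σ) ≤ Real.sqrt 2 ^ s * Real.sqrt (1 + ξ ^ 2) ^ (-s) := by
  have hξ0 : 0 < ξ := zero_lt_one.trans_le hξ
  have hbracket : Real.sqrt (1 + ξ ^ 2) ≤ Real.sqrt 2 * ξ := by
    calc Real.sqrt (1 + ξ ^ 2) ≤ Real.sqrt (2 * ξ ^ 2) := Real.sqrt_le_sqrt (by nlinarith)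
      _ = Real.sqrt 2 * ξ := by rw [Real.sqrt_mul zero_le_two, Real.sqrt_sq hξ0.le]
  calc ξ ^ (-σ) ≤ ξ ^ (-s) := Real.rpow_le_rpow_of_exponent_le hξ (neg_le_neg hsσ)
    _ = Real.sqrt 2 ^ s * (Real.sqrt 2 * ξ) ^ (-s) := by
        rw [Real.mul_rpow (by positivity) hξ0.le, ← mul_assoc, ← Real.rpow_add (by positivity),
          add_neg_cancel, Real.rpow_zero, one_mul]
    _ ≤ Real.sqrt 2 ^ s * Real.sqrt (1 + ξ ^ 2) ^ (-s) :=
        mul_le_mul_of_nonneg_left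
          (Real.rpow_le_rpow_of_nonpos (by positivity) hbracket (neg_nonpos.mpr hs)) (by positivity)

lemma le_denominator_of_le_abs {ε c₀ ξ x R : ℝ} (hc₀ : 0 ≤ c₀) (hξ : 0 ≤ ξ) (hx : 0 ≤ x)
    (hR : c₀ * ξ ^ ((4 : ℝ) / 3) ≤ |R|) :
    12 * ε ^ 2 * c₀ ^ 2 * ξ ^ ((8 : ℝ) / 3) ≤
      12 * ε ^ 2 * R ^ 2 + x ^ ((2 : ℝ) / 3) * (ε ^ 2 * x ^ 2 + 2) := by
  have hR2 : c₀ ^ 2 * ξ ^ ((8 : ℝ) / 3) ≤ R ^ 2 := by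
    rw [← sq_abs R, show (8 : ℝ) / 3 = 4 / 3 * 2 by norm_num, Real.rpow_mul hξ,
      Real.rpow_two, ← mul_pow]
    gcongr
  have : 0 ≤ x ^ ((2 : ℝ) / 3) * (ε ^ 2 * x ^ 2 + 2) := by positivity
  nlinarith [sq_nonneg ε]

theorem xi1_integral_decay_general (ε p c₀ : ℝ) (hε : 0 < ε)
    (hp1 : 1 ≤ p) (hp3 : p < 3) (hc₀ : 0 < c₀) :
    ∃ C > 0, ∀ ξ : ℝ, 1 < ξ → ∀ r : ℝ → ℝ,
      (∀ ξ₁ : ℝ, c₀ * ξ ^ ((4 : ℝ) / 3) ≤ |r ξ₁|) →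
      (∫ ξ₁ in Set.Ioi (0 : ℝ),
          Real.sqrt (1 + (ε * ξ₁) ^ 2) ^ (-(4 : ℝ)) * ξ₁ ^ (-(1 : ℝ) / 3) /
            (12 * ε ^ 2 * (r ξ₁) ^ 2 + ξ₁ ^ ((2 : ℝ) / 3) * (ε ^ 2 * ξ₁ ^ 2 + 2)))
        ≤ C * Real.sqrt (1 + ξ ^ 2) ^ (-(3 - 1 / p)) := by
  have hs0 : 0 ≤ 3 - 1 / p := by
    have := one_div_le_one_div_of_le zero_lt_one hp1; linarith
  have hs83 : 3 - 1 / p ≤ 8 / 3 := by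
    have := one_div_lt_one_div_of_lt (by linarith) hp3; linarith
  set K := ∫ x in Ioi (0 : ℝ), Real.sqrt (1 + (ε * x) ^ 2) ^ (-(4 : ℝ)) * x ^ (-(1 : ℝ) / 3)
  have hK : 0 ≤ K := setIntegral_nonneg measurableSet_Ioi fun x hx =>
    mul_nonneg (by positivity) (Real.rpow_nonneg (le_of_lt hx) _)
  refine ⟨K / (12 * ε ^ 2 * c₀ ^ 2) * Real.sqrt 2 ^ (3 - 1 / p) + 1, by positivity, ?_⟩
  intro ξ hξ r hr
  calc _ ≤ K / (12 * ε ^ 2 * c₀ ^ 2 * ξ ^ ((8 : ℝ) / 3)) :=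
        setIntegral_div_le_of_le measurableSet_Ioi
          (integrableOn_Ioi_sqrt_one_add_sq_rpow_neg_mul_rpow hε.ne' (by norm_num) (by norm_num))
          (fun x hx => mul_nonneg (by positivity) (Real.rpow_nonneg (le_of_lt hx) _))
          (by positivity) fun x hx =>
            le_denominator_of_le_abs hc₀.le (by linarith) hx.out.le (hr x)
    _ = K / (12 * ε ^ 2 * c₀ ^ 2) * ξ ^ (-(8 : ℝ) / 3) := by
        rw [neg_div, Real.rpow_neg (by linarith)]; field_simp
    _ ≤ K / (12 * ε ^ 2 * c₀ ^ 2) * (Real.sqrt 2 ^ (3 - 1 / p) *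
          Real.sqrt (1 + ξ ^ 2) ^ (-(3 - 1 / p))) := by
        gcongr
        rw [neg_div]
        exact rpow_neg_le_mul_sqrt_one_add_sq_rpow_neg hξ.le hs0 hs83
    _ ≤ _ := by
        rw [← mul_assoc]
        gcongr
        linarith

/-- The `ξ₁`-integral decays like `⟨ξ⟩^{-(3-1/p)}`, given the uniform lower
bound `|r(ξ₁)| ≳ ξ^{4/3}`. -/
theorem xi1_integral_decay (ε a p c₀ : ℝ) (hε : 0 < ε) (ha0 : 0 < a) (ha1 : a < 4 / 3)
    (hp1 : 1 ≤ p) (hp3 : p < 3) (hc₀ : 0 < c₀) :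
    ∃ C > 0, ∀ ξ : ℝ, 1 < ξ → ∀ r : ℝ → ℝ,
      (∀ ξ₁ : ℝ, c₀ * ξ ^ ((4 : ℝ) / 3) ≤ |r ξ₁|) →
      (∫ ξ₁ in Set.Ioi (0 : ℝ),
          Real.sqrt (1 + (ε * ξ₁) ^ 2) ^ (-(4 : ℝ)) * ξ₁ ^ (-(1 : ℝ) / 3) /
            (12 * ε ^ 2 * (r ξ₁) ^ 2 + ξ₁ ^ ((2 : ℝ) / 3) * (ε ^ 2 * ξ₁ ^ 2 + 2)))
        ≤ C * Real.sqrt (1 + ξ ^ 2) ^ (-(3 - 1 / p)) :=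
  xi1_integral_decay_general ε p c₀ hε hp1 hp3 hc₀
end
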